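/- arXiv:0707.4240 — 5 statements merged into one kernel-verified Lean document; each statement's English description precedes it below -/
import Mathlib

section
/- Let H be a separable infinite-dimensional complex Hilbert space and let N be a seminorm on the ideal J(H) of finite-rank bounded operators on H such that N(U T) = N(T) for every T ∈ J(H) and every unitary operator U ∈ B(H). Then for every A ∈ B(H) and every T ∈ J(H), the composition A T lies in J(H) and N(A T) ≤ ‖A‖ · N(T), where ‖A‖ is the operator norm of A. -/
/-!
By polar decomposition an invertible operator is `B = W |B|` with `W` unitary and
`‖|B|‖ = ‖B‖`, and a self-adjoint `S` equals `‖S‖ / 2 • (U + U*)` for some unitary `U`; left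
unitary invariance and the triangle inequality then give `N (B T) ≤ ‖B‖ N T`. A general `A` may be
replaced by the finite-rank `F = A P`, with `P` the orthogonal projection onto the range of `T`.
By the Fredholm alternative `F - μ` is invertible for all small `μ ≠ 0`, and the bound
`N (F T) ≤ (‖F - μ‖ + |μ|) N T` tends to `‖F‖ N T` as `μ → 0`.
-/

/-- A bounded operator has finite rank if its range is a finite-dimensional subspace. -/
def FiniteRank {H : Type*} [NormedAddCommGroup H] [InnerProductSpace ℂ H]
    (T : H →L[ℂ] H) : Prop :=
  FiniteDimensional ℂ (LinearMap.range (T : H →ₗ[ℂ] H))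

open Complex Filter Topology Module End

section CStarAlgebra

variable {A : Type*} [CStarAlgebra A] [PartialOrder A] [StarOrderedRing A]

theorem IsSelfAdjoint.exists_mem_unitary_eq_smul_add_star {a : A} (ha : IsSelfAdjoint a) :
    ∃ u ∈ unitary A, a = ((‖a‖ / 2 : ℝ) : ℂ) • (u + star u) := by
  rcases eq_or_ne a 0 with rfl | ha0
  · exact ⟨1, one_mem _, by simp⟩
  have hna : (‖a‖ : ℂ) ≠ 0 := ofReal_ne_zero.mpr (norm_ne_zero_iff.mpr ha0)
  obtain ⟨b, hb_def⟩ : ∃ b : A, b = ((‖a‖⁻¹ : ℝ) : ℂ) • a := ⟨_, rfl⟩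
  have hb : IsSelfAdjoint b :=
    hb_def ▸ (show IsSelfAdjoint ((‖a‖⁻¹ : ℝ) : ℂ) from conj_ofReal _).smul ha
  have hb_norm : ‖b‖ ≤ 1 := by
    simp [hb_def, norm_smul, inv_mul_cancel₀ (norm_ne_zero_iff.mpr ha0)]
  set s := CFC.sqrt (1 - b ^ 2)
  have hs : IsSelfAdjoint s := (CFC.sqrt_nonneg _).isSelfAdjoint
  refine ⟨b + I • s, hb.self_add_I_smul_cfcSqrt_sub_sq_mem_unitary b hb_norm, ?_⟩
  have hstar : star (b + I • s) = b - I • s := by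
    rw [star_add, star_smul, hb.star_eq, hs.star_eq, Complex.star_def, conj_I, neg_smul,
      sub_eq_add_neg]
  rw [hstar, show b + I • s + (b - I • s) = (2 : ℂ) • b by module, hb_def, smul_smul, smul_smul]
  convert (one_smul ℂ a).symm
  push_cast
  field_simp

theorem IsUnit.exists_mem_unitary_eq_mul_cfcAbs {b : A} (hb : IsUnit b) :
    ∃ w ∈ unitary A, b = w * CFC.abs b := by
  set r := CFC.abs b
  have hr : IsUnit r := (CFC.isUnit_sqrt_iff _).mpr (hb.star.mul hb)
  have hr_inv : IsSelfAdjoint (Ring.inverse r) := (CFC.abs_nonneg b).isSelfAdjoint.ringInverse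
  refine ⟨b * Ring.inverse r, (hb.mul hr.ringInverse).mem_unitary_of_star_mul_self ?_, ?_⟩
  · calc star (b * Ring.inverse r) * (b * Ring.inverse r)
        = Ring.inverse r * (r * r) * Ring.inverse r := by
          rw [CFC.abs_mul_abs, star_mul, hr_inv.star_eq]; noncomm_ring
      _ = 1 := by
          rw [← mul_assoc, Ring.inverse_mul_cancel r hr, one_mul, Ring.mul_inverse_cancel r hr]
  · rw [mul_assoc, Ring.inverse_mul_cancel r hr, mul_one]

end CStarAlgebra

namespace FiniteRank

variable {H : Type*} [NormedAddCommGroup H] [InnerProductSpace ℂ H] {F T : H →L[ℂ] H}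

theorem comp (A : H →L[ℂ] H) (hT : FiniteRank T) : FiniteRank (A ∘L T) := by
  have : FiniteDimensional ℂ (LinearMap.range (T : H →ₗ[ℂ] H)) := hT
  show FiniteDimensional ℂ (LinearMap.range ((A : H →ₗ[ℂ] H) ∘ₗ (T : H →ₗ[ℂ] H)))
  rw [LinearMap.range_comp]
  infer_instance

theorem smul (c : ℂ) (hT : FiniteRank T) : FiniteRank (c • T) := by
  convert hT.comp (c • 1) using 1
  ext
  simp

theorem isCompactOperator (hF : FiniteRank F) : IsCompactOperator F := by
  have : FiniteDimensional ℂ (LinearMap.range (F : H →ₗ[ℂ] H)) := hF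
  exact (isCompactOperator_of_locallyCompactSpace_dom
    (F.codRestrict _ (LinearMap.mem_range_self (F : H →ₗ[ℂ] H)))).continuous_comp
    continuous_subtype_val

theorem finite_hasEigenvalue (hF : FiniteRank F) :
    {μ | HasEigenvalue (F : End ℂ H) μ}.Finite := by
  have : FiniteDimensional ℂ (LinearMap.range (F : H →ₗ[ℂ] H)) := hF
  let f := (F : H →ₗ[ℂ] H).restrict (p := LinearMap.range (F : H →ₗ[ℂ] H))
    (q := LinearMap.range (F : H →ₗ[ℂ] H)) fun x _ ↦ LinearMap.mem_range_self _ x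
  refine ((Module.End.finite_hasEigenvalue f).insert 0).subset fun μ hμ ↦ ?_
  rcases eq_or_ne μ 0 with rfl | hμ0
  · exact Set.mem_insert _ _
  obtain ⟨x, hx⟩ := (hμ : HasEigenvalue (F : End ℂ H) μ).exists_hasEigenvector
  have hxF : x ∈ LinearMap.range (F : H →ₗ[ℂ] H) :=
    ⟨μ⁻¹ • x, by simp [hx.apply_eq_smul, smul_smul, inv_mul_cancel₀ hμ0]⟩
  refine Set.mem_insert_of_mem _ (hasEigenvalue_of_hasEigenvector (x := ⟨x, hxF⟩) ?_)
  exact hasEigenvector_iff.mpr ⟨mem_eigenspace_iff.mpr (Subtype.ext hx.apply_eq_smul),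
    by simpa using hx.2⟩

theorem eventually_isUnit_sub_smul_one [CompleteSpace H] (hF : FiniteRank F) :
    ∀ᶠ μ in 𝓝[≠] (0 : ℂ), IsUnit (F - μ • 1) := by
  have hS := hF.finite_hasEigenvalue.sdiff (t := {0})
  filter_upwards [nhdsWithin_le_nhds (hS.isClosed.isOpen_compl.mem_nhds (by simp)),
    self_mem_nhdsWithin] with μ hμ (hμ0 : μ ≠ 0)
  have := (hF.isCompactOperator.hasEigenvalue_or_mem_resolventSet hμ0).resolve_left
    fun h ↦ hμ ⟨h, hμ0⟩
  rw [spectrum.mem_resolventSet_iff, ← IsUnit.neg_iff] at this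
  simpa [Algebra.algebraMap_eq_smul_one] using this

theorem exists_finiteRank_comp_eq (A : H →L[ℂ] H) (hT : FiniteRank T) :
    ∃ F : H →L[ℂ] H, FiniteRank F ∧ ‖F‖ ≤ ‖A‖ ∧ F ∘L T = A ∘L T := by
  have : FiniteDimensional ℂ (LinearMap.range (T : H →ₗ[ℂ] H)) := hT
  set P := (LinearMap.range (T : H →ₗ[ℂ] H)).starProjection
  have hP : FiniteRank P := by
    show FiniteDimensional ℂ (LinearMap.range (P : H →ₗ[ℂ] H))
    rwa [Submodule.range_starProjection]
  refine ⟨A ∘L P, hP.comp A, ?_, ?_⟩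
  · calc ‖A ∘L P‖ ≤ ‖A‖ * ‖P‖ := A.opNorm_comp_le P
      _ ≤ ‖A‖ := mul_le_of_le_one_right (norm_nonneg A) (Submodule.starProjection_norm_le _)
  · rw [ContinuousLinearMap.comp_assoc]
    congr 1
    ext x
    exact Submodule.starProjection_eq_self_iff.mpr (LinearMap.mem_range_self _ x)

end FiniteRank

section LeftUnitarilyInvariant

variable {H : Type*} [NormedAddCommGroup H] [InnerProductSpace ℂ H] {N : (H →L[ℂ] H) → ℝ}
  {T : H →L[ℂ] H}
  (hsmul : ∀ (c : ℂ) (T : H →L[ℂ] H), FiniteRank T → N (c • T) = ‖c‖ * N T)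
  (hadd : ∀ S T : H →L[ℂ] H, FiniteRank S → FiniteRank T → N (S + T) ≤ N S + N T)
include hsmul hadd

theorem seminorm_nonneg (hT : FiniteRank T) : 0 ≤ N T := by
  have h := hadd T ((-1 : ℂ) • T) hT (hT.smul _)
  rw [hsmul _ T hT, show T + (-1 : ℂ) • T = (0 : ℂ) • T by module, hsmul _ T hT] at h
  norm_num at h
  linarith

variable [CompleteSpace H]
  (hunit : ∀ U : H →L[ℂ] H, U ∈ unitary (H →L[ℂ] H) →
      ∀ T : H →L[ℂ] H, FiniteRank T → N (U ∘L T) = N T)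
include hunit

theorem seminorm_comp_le_of_isSelfAdjoint {S : H →L[ℂ] H} (hS : IsSelfAdjoint S)
    (hT : FiniteRank T) : N (S ∘L T) ≤ ‖S‖ * N T := by
  obtain ⟨U, hU, hSU⟩ := hS.exists_mem_unitary_eq_smul_add_star
  calc N (S ∘L T) = N (((‖S‖ / 2 : ℝ) : ℂ) • ((U + star U) ∘L T)) := by
        rw [← ContinuousLinearMap.smul_comp, ← hSU]
    _ = ‖S‖ / 2 * N (U ∘L T + star U ∘L T) := by
        rw [hsmul _ _ (hT.comp _), norm_real, Real.norm_of_nonneg (by positivity),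
          ContinuousLinearMap.add_comp]
    _ ≤ ‖S‖ / 2 * (N (U ∘L T) + N (star U ∘L T)) := by
        gcongr
        exact hadd _ _ (hT.comp U) (hT.comp _)
    _ = ‖S‖ * N T := by
        rw [hunit U hU T hT, hunit _ (Unitary.star_mem hU) T hT]
        ring

theorem seminorm_comp_le_of_isUnit {B : H →L[ℂ] H} (hB : IsUnit B) (hT : FiniteRank T) :
    N (B ∘L T) ≤ ‖B‖ * N T := by
  obtain ⟨W, hW, hBW⟩ := hB.exists_mem_unitary_eq_mul_cfcAbs
  calc N (B ∘L T) = N (W ∘L (CFC.abs B ∘L T)) := by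
        conv_lhs => rw [hBW]
        rfl
    _ = N (CFC.abs B ∘L T) := hunit W hW _ (hT.comp _)
    _ ≤ ‖CFC.abs B‖ * N T :=
        seminorm_comp_le_of_isSelfAdjoint hsmul hadd hunit (CFC.abs_nonneg B).isSelfAdjoint hT
    _ = ‖B‖ * N T := by rw [CFC.norm_abs]

theorem seminorm_comp_le_of_finiteRank {F : H →L[ℂ] H} (hF : FiniteRank F) (hT : FiniteRank T) :
    N (F ∘L T) ≤ ‖F‖ * N T := by
  have hbound (μ : ℂ) (hμ : IsUnit (F - μ • 1)) :
      N (F ∘L T) ≤ (‖F - μ • 1‖ + ‖μ‖) * N T :=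
    calc N (F ∘L T) = N ((F - μ • 1) ∘L T + μ • T) := by
          congr 1
          ext
          simp
      _ ≤ N ((F - μ • 1) ∘L T) + N (μ • T) := hadd _ _ (hT.comp _) (hT.smul μ)
      _ ≤ ‖F - μ • 1‖ * N T + ‖μ‖ * N T :=
          add_le_add (seminorm_comp_le_of_isUnit hsmul hadd hunit hμ hT) (hsmul μ T hT).le
      _ = (‖F - μ • 1‖ + ‖μ‖) * N T := by ring
  have hlim : Tendsto (fun μ : ℂ ↦ (‖F - μ • 1‖ + ‖μ‖) * N T) (𝓝[≠] 0) (𝓝 (‖F‖ * N T)) := by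
    have : Continuous fun μ : ℂ ↦ (‖F - μ • 1‖ + ‖μ‖) * N T := by fun_prop
    simpa using (this.tendsto 0).mono_left nhdsWithin_le_nhds
  exact ge_of_tendsto hlim (hF.eventually_isUnit_sub_smul_one.mono hbound)

end LeftUnitarilyInvariant

theorem seminorm_comp_le_of_left_unitarily_invariant_general
    {H : Type*} [NormedAddCommGroup H] [InnerProductSpace ℂ H] [CompleteSpace H]
    (N : (H →L[ℂ] H) → ℝ)
    (hsmul : ∀ (c : ℂ) (T : H →L[ℂ] H), FiniteRank T → N (c • T) = ‖c‖ * N T)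
    (hadd : ∀ S T : H →L[ℂ] H, FiniteRank S → FiniteRank T → N (S + T) ≤ N S + N T)
    (hunit : ∀ U : H →L[ℂ] H, U ∈ unitary (H →L[ℂ] H) →
      ∀ T : H →L[ℂ] H, FiniteRank T → N (U ∘L T) = N T)
    (A T : H →L[ℂ] H) (hT : FiniteRank T) :
    FiniteRank (A ∘L T) ∧ N (A ∘L T) ≤ ‖A‖ * N T := by
  refine ⟨hT.comp A, ?_⟩
  obtain ⟨F, hF, hFA, hFT⟩ := hT.exists_finiteRank_comp_eq A
  calc N (A ∘L T) = N (F ∘L T) := by rw [hFT]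
    _ ≤ ‖F‖ * N T := seminorm_comp_le_of_finiteRank hsmul hadd hunit hF hT
    _ ≤ ‖A‖ * N T := mul_le_mul_of_nonneg_right hFA (seminorm_nonneg hsmul hadd hT)

/-- If `N` is a seminorm on the ideal `J(H)` of finite-rank operators on a separable
infinite-dimensional complex Hilbert space `H` which is left unitarily invariant,
then for every `A ∈ B(H)` and `T ∈ J(H)`, `A T ∈ J(H)` and `N(A T) ≤ ‖A‖ ⬝ N(T)`. -/
theorem seminorm_comp_le_of_left_unitarily_invariant
    {H : Type*} [NormedAddCommGroup H] [InnerProductSpace ℂ H] [CompleteSpace H]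
    [TopologicalSpace.SeparableSpace H] (hinf : ¬ FiniteDimensional ℂ H)
    (N : (H →L[ℂ] H) → ℝ)
    (hsmul : ∀ (c : ℂ) (T : H →L[ℂ] H), FiniteRank T → N (c • T) = ‖c‖ * N T)
    (hadd : ∀ S T : H →L[ℂ] H, FiniteRank S → FiniteRank T → N (S + T) ≤ N S + N T)
    (hunit : ∀ U : H →L[ℂ] H, U ∈ unitary (H →L[ℂ] H) →
      ∀ T : H →L[ℂ] H, FiniteRank T → N (U ∘L T) = N T)
    (A T : H →L[ℂ] H) (hT : FiniteRank T) :
    FiniteRank (A ∘L T) ∧ N (A ∘L T) ≤ ‖A‖ * N T :=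
  seminorm_comp_le_of_left_unitarily_invariant_general N hsmul hadd hunit A T hT
end

section
/- For every integer k ≥ 1 and every x ∈ c₀₀, sup{ |Σ_n x_n y_n| : y ∈ c₀₀ with Σ_{n=0}^{k-1} y*_n ≤ 1 } = max{ sup_n |x_n|, (1/k) Σ_n |x_n| }. That is, the dual norm, with respect to the pairing (x,y) ↦ Σ_n x_n y_n, of the Ky Fan k-th norm y ↦ y*₀ + y*₁ + ⋯ + y*_{k−1} equals max{‖x‖_∞, ‖x‖₁/k}. -/
/-- The nonincreasing rearrangement of the absolute values of a finitely supported
complex sequence: `rearr x n` is the `(n+1)`-st largest value among the `|x m|`. -/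
noncomputable def rearr (x : ℕ →₀ ℂ) (n : ℕ) : ℝ :=
  sInf {c : ℝ | ∃ S : Finset ℕ, S.card = n ∧ ∀ m ∉ S, ‖x m‖ ≤ c}

namespace RearrAux

def rset (y : ℕ →₀ ℂ) (n : ℕ) : Set ℝ :=
  {c : ℝ | ∃ S : Finset ℕ, S.card = n ∧ ∀ m ∉ S, ‖y m‖ ≤ c}

lemma rearr_eq (y : ℕ →₀ ℂ) (n : ℕ) : rearr y n = sInf (rset y n) := rfl

lemma nonneg_of_mem {y : ℕ →₀ ℂ} {n : ℕ} {c : ℝ} (hc : c ∈ rset y n) : 0 ≤ c := by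
  obtain ⟨S, -, h⟩ := hc
  obtain ⟨m, hm⟩ := Infinite.exists_notMem_finset S
  exact le_trans (norm_nonneg _) (h m hm)

lemma rset_bddBelow (y : ℕ →₀ ℂ) (n : ℕ) : BddBelow (rset y n) :=
  ⟨0, fun _ hc => nonneg_of_mem hc⟩

lemma univ_bound (y : ℕ →₀ ℂ) (m : ℕ) : ‖y m‖ ≤ ∑ j ∈ y.support, ‖y j‖ := by
  by_cases hm : m ∈ y.support
  · exact Finset.single_le_sum (fun j _ => norm_nonneg _) hm
  · rw [Finsupp.notMem_support_iff.mp hm, norm_zero]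
    exact Finset.sum_nonneg fun j _ => norm_nonneg _

lemma rset_nonempty (y : ℕ →₀ ℂ) (n : ℕ) : (rset y n).Nonempty :=
  ⟨∑ j ∈ y.support, ‖y j‖, Finset.range n, Finset.card_range n,
    fun m _ => univ_bound y m⟩

lemma rearr_le_of_mem {y : ℕ →₀ ℂ} {n : ℕ} {c : ℝ} (hc : c ∈ rset y n) : rearr y n ≤ c :=
  csInf_le (rset_bddBelow y n) hc

lemma rearr_nonneg (y : ℕ →₀ ℂ) (n : ℕ) : 0 ≤ rearr y n :=
  le_csInf (rset_nonempty y n) fun _ hc => nonneg_of_mem hc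

lemma rearr_anti (y : ℕ →₀ ℂ) : ∀ {n m : ℕ}, n ≤ m → rearr y m ≤ rearr y n := by
  have step : ∀ n, rearr y (n + 1) ≤ rearr y n := by
    intro n
    apply csInf_le_csInf (rset_bddBelow y (n + 1)) (rset_nonempty y n)
    rintro c ⟨S, hS, h⟩
    obtain ⟨a, ha⟩ := Infinite.exists_notMem_finset S
    exact ⟨insert a S, by rw [Finset.card_insert_of_notMem ha, hS],
      fun m hm => h m fun hmS => hm (Finset.mem_insert_of_mem hmS)⟩
  intro n m h
  induction h with
  | refl => exact le_refl _
  | step h ih => exact le_trans (step _) ih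

noncomputable def fmax (y : ℕ →₀ ℂ) (S : Finset ℕ) : ℝ :=
  (insert (0:ℝ) ((y.support \ S).image fun m => ‖y m‖)).max' (by simp)

lemma fmax_nonneg (y : ℕ →₀ ℂ) (S : Finset ℕ) : 0 ≤ fmax y S := by
  unfold fmax
  exact Finset.le_max' _ _ (Finset.mem_insert_self _ _)

lemma fmax_le' (y : ℕ →₀ ℂ) (S : Finset ℕ) : ∀ m ∈ y.support \ S, ‖y m‖ ≤ fmax y S := by
  intro m hm
  unfold fmax
  exact Finset.le_max' _ _ (Finset.mem_insert_of_mem (Finset.mem_image_of_mem (fun m => ‖y m‖) hm))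

lemma fmax_le_of (y : ℕ →₀ ℂ) (S : Finset ℕ) (c : ℝ) (hc : 0 ≤ c)
    (h : ∀ m ∈ y.support \ S, ‖y m‖ ≤ c) : fmax y S ≤ c := by
  unfold fmax
  apply Finset.max'_le
  intro r hr
  rcases Finset.mem_insert.mp hr with h0 | h1
  · exact h0 ▸ hc
  · obtain ⟨m, hm, rfl⟩ := Finset.mem_image.mp h1
    exact h m hm

/-- The infimum defining `rearr` is attained. -/
lemma rearr_mem (y : ℕ →₀ ℂ) (n : ℕ) : rearr y n ∈ rset y n := by
  classical
  set f := fmax y with hf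
  have hf_nonneg := fmax_nonneg y
  have hf_le := fmax_le' y
  have hf_le_of := fmax_le_of y
  set 𝒮 : Finset (Finset ℕ) := y.support.powerset.filter (fun S => S.card ≤ n) with h𝒮
  have h𝒮ne : 𝒮.Nonempty := ⟨∅, by simp [h𝒮]⟩
  set F : Finset ℝ := 𝒮.image f with hF
  have hFne : F.Nonempty := h𝒮ne.image f
  -- every element of F belongs to rset y n
  have hF_mem : ∀ r ∈ F, r ∈ rset y n := by
    intro r hr
    obtain ⟨S, hS, rfl⟩ := Finset.mem_image.mp hr
    rw [h𝒮, Finset.mem_filter, Finset.mem_powerset] at hS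
    obtain ⟨T, hST, hTcard⟩ := Infinite.exists_superset_card_eq S n hS.2
    refine ⟨T, hTcard, fun m hm => ?_⟩
    by_cases hms : m ∈ y.support
    · exact hf_le S m (Finset.mem_sdiff.mpr ⟨hms, fun h => hm (hST h)⟩)
    · rw [Finsupp.notMem_support_iff.mp hms, norm_zero]
      exact hf_nonneg S
  -- every element of rset dominates some element of F
  have hF_dom : ∀ c ∈ rset y n, ∃ r ∈ F, r ≤ c := by
    rintro c hc
    have hc0 : 0 ≤ c := nonneg_of_mem hc
    obtain ⟨S, hScard, hS⟩ := hc
    refine ⟨f (S ∩ y.support), Finset.mem_image_of_mem f ?_, ?_⟩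
    · rw [h𝒮, Finset.mem_filter, Finset.mem_powerset]
      exact ⟨Finset.inter_subset_right,
        le_trans (Finset.card_le_card Finset.inter_subset_left) hScard.le⟩
    · refine hf_le_of _ _ hc0 fun m hm => ?_
      rw [Finset.mem_sdiff] at hm
      exact hS m fun hmS => hm.2 (Finset.mem_inter.mpr ⟨hmS, hm.1⟩)
  have h1 : rearr y n ≤ F.min' hFne := csInf_le (rset_bddBelow y n) (hF_mem _ (F.min'_mem hFne))
  have h2 : F.min' hFne ≤ rearr y n := by
    apply le_csInf (rset_nonempty y n)
    intro c hc
    obtain ⟨r, hrF, hrc⟩ := hF_dom c hc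
    exact le_trans (F.min'_le r hrF) hrc
  have : rearr y n = F.min' hFne := le_antisymm h1 h2
  rw [this]
  exact hF_mem _ (F.min'_mem hFne)

/-- The sum over any finset `T` of `‖y m‖` is at most the sum of the `T.card`
largest values. -/
lemma sum_le_sum_rearr (y : ℕ →₀ ℂ) (T : Finset ℕ) :
    ∑ m ∈ T, ‖y m‖ ≤ ∑ n ∈ Finset.range T.card, rearr y n := by
  classical
  set j := T.card with hj
  clear_value j
  induction j generalizing T with
  | zero =>
    rw [Finset.card_eq_zero.mp hj.symm]
    simp
  | succ j ih =>
    -- there is an element of T whose value is at most rearr y j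
    obtain ⟨S, hScard, hS⟩ := rearr_mem y j
    have hTS : ¬ T ⊆ S := by
      intro hsub
      have := Finset.card_le_card hsub
      omega
    obtain ⟨m₀, hm₀T, hm₀S⟩ := Finset.not_subset.mp hTS
    have hval : ‖y m₀‖ ≤ rearr y j := hS m₀ hm₀S
    have hcard : (T.erase m₀).card = j := by
      rw [Finset.card_erase_of_mem hm₀T]; omega
    calc ∑ m ∈ T, ‖y m‖ = ∑ m ∈ T.erase m₀, ‖y m‖ + ‖y m₀‖ := by
          rw [← Finset.add_sum_erase T _ hm₀T]; ring
      _ ≤ ∑ n ∈ Finset.range j, rearr y n + rearr y j :=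
          add_le_add (hcard ▸ ih (T.erase m₀) hcard.symm) hval
      _ = ∑ n ∈ Finset.range (j + 1), rearr y n := (Finset.sum_range_succ _ _).symm


end RearrAux

open RearrAux

/-- For every integer `k ≥ 1` and every `x ∈ c₀₀`, the dual norm (with respect to the
pairing `(x, y) ↦ Σ_n x_n y_n`) of the Ky Fan `k`-th norm `y ↦ y*₀ + ⋯ + y*_{k-1}`
equals `max{‖x‖_∞, ‖x‖₁ / k}`. -/
theorem dual_kyFan_eq_max (k : ℕ) (hk : 1 ≤ k) (x : ℕ →₀ ℂ) :
    sSup {r : ℝ | ∃ y : ℕ →₀ ℂ, (∑ n ∈ Finset.range k, rearr y n) ≤ 1 ∧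
        r = ‖∑ n ∈ x.support, x n * y n‖} =
      max (⨆ n, ‖x n‖) ((1 / (k : ℝ)) * ∑ n ∈ x.support, ‖x n‖) := by
  classical
  have hk0 : (0:ℝ) < (k:ℝ) := by exact_mod_cast hk
  set A : ℝ := ⨆ n, ‖x n‖ with hA
  set B : ℝ := ∑ n ∈ x.support, ‖x n‖ with hB
  set M : ℝ := max A ((1 / (k:ℝ)) * B) with hM
  set R : Set ℝ := {r : ℝ | ∃ y : ℕ →₀ ℂ, (∑ n ∈ Finset.range k, rearr y n) ≤ 1 ∧
        r = ‖∑ n ∈ x.support, x n * y n‖} with hR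
  have hbddrange : BddAbove (Set.range fun n => ‖x n‖) := by
    refine ⟨B, ?_⟩
    rintro r ⟨m, rfl⟩
    exact univ_bound x m
  have hA_ge : ∀ m, ‖x m‖ ≤ A := fun m => le_ciSup hbddrange m
  have hA0 : 0 ≤ A := le_trans (norm_nonneg (x 0)) (hA_ge 0)
  have hB0 : 0 ≤ B := Finset.sum_nonneg fun j _ => norm_nonneg _
  have hAM : A ≤ M := le_max_left _ _
  have hBM : (1 / (k:ℝ)) * B ≤ M := le_max_right _ _
  have hM0 : 0 ≤ M := le_trans hA0 hAM
  -- upper bound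
  have ub : ∀ y : ℕ →₀ ℂ, (∑ n ∈ Finset.range k, rearr y n) ≤ 1 →
      ‖∑ n ∈ x.support, x n * y n‖ ≤ M := by
    intro y hy
    set t : ℝ := rearr y (k - 1) with ht
    have ht0 : 0 ≤ t := rearr_nonneg y _
    have ht_le : ∀ n < k, t ≤ rearr y n := fun n hn => rearr_anti y (by omega)
    have hkt : (k:ℝ) * t ≤ ∑ n ∈ Finset.range k, rearr y n := by
      calc (k:ℝ) * t = ∑ _n ∈ Finset.range k, t := by
            rw [Finset.sum_const, Finset.card_range, nsmul_eq_mul]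
        _ ≤ ∑ n ∈ Finset.range k, rearr y n :=
            Finset.sum_le_sum fun n hn => ht_le n (Finset.mem_range.mp hn)
    have hkt1 : (k:ℝ) * t ≤ 1 := le_trans hkt hy
    set T : Finset ℕ := y.support.filter (fun m => t < ‖y m‖) with hT
    have hTcard : T.card ≤ k - 1 := by
      obtain ⟨S, hScard, hS⟩ := rearr_mem y (k - 1)
      refine hScard ▸ Finset.card_le_card ?_
      intro m hm
      rw [hT, Finset.mem_filter] at hm
      by_contra hmS
      exact absurd (hS m hmS) (not_le.mpr hm.2)
    have hTk : (T.card : ℝ) ≤ (k : ℝ) := by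
      have : T.card ≤ k := le_trans hTcard (by omega)
      exact_mod_cast this
    set E : ℝ := ∑ m ∈ x.support, max (‖y m‖ - t) 0 with hE
    have hE0 : 0 ≤ E := Finset.sum_nonneg fun m _ => le_max_right _ _
    have hE_le : E ≤ ∑ m ∈ T, (‖y m‖ - t) := by
      have h1 : E = ∑ m ∈ x.support ∩ T, max (‖y m‖ - t) 0 := by
        rw [hE]
        refine (Finset.sum_subset Finset.inter_subset_left ?_).symm
        intro m hm hmT
        have hmy : ¬ t < ‖y m‖ := by
          intro hlt
          by_cases hys : m ∈ y.support
          · exact hmT (Finset.mem_inter.mpr ⟨hm, Finset.mem_filter.mpr ⟨hys, hlt⟩⟩)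
          · rw [Finsupp.notMem_support_iff.mp hys, norm_zero] at hlt
            exact absurd ht0 (not_le.mpr hlt)
        rw [max_eq_right (by linarith [not_lt.mp hmy])]
      rw [h1]
      refine le_trans (Finset.sum_le_sum fun m hm => ?_)
        (Finset.sum_le_sum_of_subset_of_nonneg Finset.inter_subset_right ?_)
      · have hmT := (Finset.mem_inter.mp hm).2
        rw [hT, Finset.mem_filter] at hmT
        exact max_le (le_refl _) (by linarith [hmT.2])
      · intro m hm _
        rw [hT, Finset.mem_filter] at hm
        linarith [hm.2]
    have key : (∑ m ∈ T, (‖y m‖ - t)) + (k:ℝ) * t ≤ 1 := by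
      have h1 : ∑ m ∈ T, (‖y m‖ - t) = (∑ m ∈ T, ‖y m‖) - (T.card : ℝ) * t := by
        rw [Finset.sum_sub_distrib, Finset.sum_const, nsmul_eq_mul]
      have h2 : (∑ m ∈ T, ‖y m‖) ≤ ∑ n ∈ Finset.range T.card, rearr y n :=
        sum_le_sum_rearr y T
      have h3 : (∑ n ∈ Finset.range T.card, rearr y n) + ((k:ℝ) - T.card) * t ≤
          ∑ n ∈ Finset.range k, rearr y n := by
        have hsplit : ∑ n ∈ Finset.range k, rearr y n =
            (∑ n ∈ Finset.range T.card, rearr y n) + ∑ n ∈ Finset.Ico T.card k, rearr y n := by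
          rw [Finset.range_eq_Ico, ← Finset.sum_Ico_consecutive _ (Nat.zero_le _) (by omega : T.card ≤ k), ← Finset.range_eq_Ico]
        rw [hsplit]
        have : ((k:ℝ) - T.card) * t ≤ ∑ n ∈ Finset.Ico T.card k, rearr y n := by
          calc ((k:ℝ) - T.card) * t = ∑ _n ∈ Finset.Ico T.card k, t := by
                rw [Finset.sum_const, Nat.card_Ico, nsmul_eq_mul]
                congr 1
                have : T.card ≤ k := by omega
                push_cast [Nat.cast_sub this]
                ring
            _ ≤ _ := Finset.sum_le_sum fun n hn =>
                ht_le n (Finset.mem_Ico.mp hn).2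
        linarith
      linarith
    have hE_bound : E + (k:ℝ) * t ≤ 1 := by linarith
    -- now the norm estimate
    calc ‖∑ n ∈ x.support, x n * y n‖ ≤ ∑ n ∈ x.support, ‖x n * y n‖ :=
          norm_sum_le _ _
      _ = ∑ n ∈ x.support, ‖x n‖ * ‖y n‖ := by
          refine Finset.sum_congr rfl fun n _ => norm_mul _ _
      _ ≤ ∑ n ∈ x.support, (‖x n‖ * t + A * max (‖y n‖ - t) 0) := by
          refine Finset.sum_le_sum fun n _ => ?_
          have h1 : ‖y n‖ ≤ t + max (‖y n‖ - t) 0 := by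
            rcases le_total (‖y n‖) t with h | h
            · linarith [le_max_right (‖y n‖ - t) 0]
            · rw [max_eq_left (by linarith)]; linarith
          calc ‖x n‖ * ‖y n‖ ≤ ‖x n‖ * (t + max (‖y n‖ - t) 0) :=
                mul_le_mul_of_nonneg_left h1 (norm_nonneg _)
            _ = ‖x n‖ * t + ‖x n‖ * max (‖y n‖ - t) 0 := by ring
            _ ≤ ‖x n‖ * t + A * max (‖y n‖ - t) 0 := by
                have := mul_le_mul_of_nonneg_right (hA_ge n) (le_max_right (‖y n‖ - t) 0)
                linarith
      _ = B * t + A * E := by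
          rw [hE, hB, Finset.mul_sum, Finset.sum_mul, ← Finset.sum_add_distrib]
      _ ≤ M * ((k:ℝ) * t) + M * (1 - (k:ℝ) * t) := by
          have h1 : B * t ≤ M * ((k:ℝ) * t) := by
            have : B * t = ((1 / (k:ℝ)) * B) * ((k:ℝ) * t) := by
              field_simp
            rw [this]
            exact mul_le_mul hBM (le_refl _) (by positivity) hM0
          have h2 : A * E ≤ M * (1 - (k:ℝ) * t) := by
            calc A * E ≤ M * E := mul_le_mul_of_nonneg_right hAM hE0
              _ ≤ M * (1 - (k:ℝ) * t) :=
                mul_le_mul_of_nonneg_left (by linarith) hM0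
          linarith
      _ = M := by ring
  have hRbdd : BddAbove R := by
    refine ⟨M, ?_⟩
    rintro r ⟨y, hy, rfl⟩
    exact ub y hy
  -- the value (1/k) * B is attained
  have memB : (1 / (k:ℝ)) * B ∈ R := by
    set y : ℕ →₀ ℂ := Finsupp.onFinset x.support
      (fun m => if x m = 0 then 0 else (1 / (k:ℂ)) * ((starRingEnd ℂ) (x m) / (‖x m‖ : ℂ)))
      (by
        intro a ha
        rw [Finsupp.mem_support_iff]
        intro h0
        exact ha (by simp [h0])) with hy
    have hyval : ∀ m, x m ≠ 0 →
        y m = (1 / (k:ℂ)) * ((starRingEnd ℂ) (x m) / (‖x m‖ : ℂ)) := by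
      intro m hm
      rw [hy]
      simp [Finsupp.onFinset_apply, hm]
    have hyval0 : ∀ m, x m = 0 → y m = 0 := by
      intro m hm
      rw [hy]
      simp [Finsupp.onFinset_apply, hm]
    have hynorm : ∀ m, ‖y m‖ ≤ 1 / (k:ℝ) := by
      intro m
      by_cases hm : x m = 0
      · rw [hyval0 m hm, norm_zero]
        positivity
      · have hxm : (0:ℝ) < ‖x m‖ := norm_pos_iff.mpr hm
        rw [hyval m hm, norm_mul, norm_div, norm_div, RCLike.norm_conj,
          Complex.norm_real, Real.norm_of_nonneg (norm_nonneg _),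
          div_self (ne_of_gt hxm), mul_one, norm_one, Complex.norm_natCast]
    refine ⟨y, ?_, ?_⟩
    · calc ∑ n ∈ Finset.range k, rearr y n ≤ ∑ _n ∈ Finset.range k, (1 / (k:ℝ)) := by
            refine Finset.sum_le_sum fun n _ => ?_
            exact rearr_le_of_mem ⟨Finset.range n, Finset.card_range n, fun m _ => hynorm m⟩
        _ = 1 := by
            rw [Finset.sum_const, Finset.card_range, nsmul_eq_mul]
            field_simp
    · have hsum : ∑ n ∈ x.support, x n * y n = (((1 / (k:ℝ)) * B : ℝ) : ℂ) := by
        rw [hB, Finset.mul_sum]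
        push_cast
        refine Finset.sum_congr rfl fun m hm => ?_
        have hxm : x m ≠ 0 := Finsupp.mem_support_iff.mp hm
        have hxmn : (‖x m‖ : ℂ) ≠ 0 := by
          exact_mod_cast (norm_ne_zero_iff.mpr hxm)
        have hconj : x m * (starRingEnd ℂ) (x m) = ((‖x m‖ : ℝ) : ℂ) ^ 2 := by
          rw [Complex.mul_conj]
          norm_cast
          rw [Complex.normSq_eq_norm_sq]
        calc x m * y m
            = (1 / (k:ℂ)) * ((x m * (starRingEnd ℂ) (x m)) / (‖x m‖ : ℂ)) := by
              rw [hyval m hxm]; ring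
          _ = (1 / (k:ℂ)) * (((‖x m‖ : ℝ) : ℂ) ^ 2 / (‖x m‖ : ℂ)) := by rw [hconj]
          _ = (1 / (k:ℂ)) * ((‖x m‖ : ℝ) : ℂ) := by
              rw [sq, mul_div_assoc, div_self hxmn, mul_one]
          _ = 1 / (k:ℂ) * ↑‖x m‖ := rfl
      rw [hsum, Complex.norm_real, Real.norm_of_nonneg (by positivity)]
  -- the value A is attained
  have memA : A ∈ R := by
    by_cases hx : x = 0
    · have hA_eq : A = 0 := by
        rw [hA, hx]
        simp
      rw [hA_eq]
      refine ⟨0, ?_, ?_⟩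
      · have : ∀ n, rearr (0 : ℕ →₀ ℂ) n ≤ 0 := fun n =>
          rearr_le_of_mem ⟨Finset.range n, Finset.card_range n, fun m _ => by simp⟩
        calc ∑ n ∈ Finset.range k, rearr (0:ℕ→₀ℂ) n ≤ ∑ _n ∈ Finset.range k, (0:ℝ) :=
              Finset.sum_le_sum fun n _ => this n
          _ ≤ 1 := by simp
      · simp
    · obtain ⟨m₀, hm₀s, hm₀max⟩ := Finset.exists_max_image x.support (fun m => ‖x m‖)
        (Finsupp.support_nonempty_iff.mpr hx)
      have hxm₀ : x m₀ ≠ 0 := Finsupp.mem_support_iff.mp hm₀s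
      have hxm₀n : (0:ℝ) < ‖x m₀‖ := norm_pos_iff.mpr hxm₀
      have hA_eq : A = ‖x m₀‖ := by
        refine le_antisymm (ciSup_le fun n => ?_) (hA_ge m₀)
        by_cases hn : n ∈ x.support
        · exact hm₀max n hn
        · rw [Finsupp.notMem_support_iff.mp hn, norm_zero]
          exact le_of_lt hxm₀n
      set y : ℕ →₀ ℂ := Finsupp.single m₀ ((starRingEnd ℂ) (x m₀) / (‖x m₀‖ : ℂ)) with hy
      have hym₀ : y m₀ = (starRingEnd ℂ) (x m₀) / (‖x m₀‖ : ℂ) := by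
        rw [hy, Finsupp.single_eq_same]
      have hyother : ∀ m, m ≠ m₀ → y m = 0 := by
        intro m hm
        rw [hy, Finsupp.single_eq_of_ne' (Ne.symm hm)]
      have hynorm1 : ‖y m₀‖ = 1 := by
        rw [hym₀, norm_div, RCLike.norm_conj, Complex.norm_real,
          Real.norm_of_nonneg (norm_nonneg _), div_self (ne_of_gt hxm₀n)]
      refine ⟨y, ?_, ?_⟩
      · have h0 : rearr y 0 ≤ 1 := by
          refine rearr_le_of_mem ⟨∅, Finset.card_empty, fun m _ => ?_⟩
          by_cases hm : m = m₀
          · rw [hm, hynorm1]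
          · rw [hyother m hm, norm_zero]; norm_num
        have hpos : ∀ n, 1 ≤ n → rearr y n ≤ 0 := by
          intro n hn
          obtain ⟨T, hT, hTcard⟩ := Infinite.exists_superset_card_eq {m₀} n
            (by rw [Finset.card_singleton]; omega)
          refine rearr_le_of_mem ⟨T, hTcard, fun m hm => ?_⟩
          have : m ≠ m₀ := fun h => hm (h ▸ hT (Finset.mem_singleton_self m₀))
          rw [hyother m this, norm_zero]
        calc ∑ n ∈ Finset.range k, rearr y n
            ≤ ∑ n ∈ Finset.range k, (if n = 0 then (1:ℝ) else 0) := by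
              refine Finset.sum_le_sum fun n _ => ?_
              by_cases hn : n = 0
              · rw [hn, if_pos rfl]; exact h0
              · rw [if_neg hn]; exact hpos n (by omega)
          _ = 1 := by
              rw [Finset.sum_ite_eq' (Finset.range k) 0 (fun _ => (1:ℝ))]
              rw [if_pos (Finset.mem_range.mpr (by omega))]
      · have hsum : ∑ n ∈ x.support, x n * y n = ((‖x m₀‖ : ℝ) : ℂ) := by
          rw [Finset.sum_eq_single m₀]
          · rw [hym₀]
            have hconj : x m₀ * (starRingEnd ℂ) (x m₀) = ((‖x m₀‖ : ℝ) : ℂ) ^ 2 := by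
              rw [Complex.mul_conj]
              norm_cast
              rw [Complex.normSq_eq_norm_sq]
            have hxm₀c : ((‖x m₀‖ : ℝ) : ℂ) ≠ 0 := by exact_mod_cast ne_of_gt hxm₀n
            rw [← mul_div_assoc, hconj, sq, mul_div_assoc, div_self hxm₀c, mul_one]
          · intro m _ hm
            rw [hyother m hm, mul_zero]
          · intro h
            exact absurd hm₀s h
        rw [hsum, hA_eq, Complex.norm_real, Real.norm_of_nonneg (norm_nonneg _)]
  have hRne : R.Nonempty := ⟨A, memA⟩
  refine le_antisymm ?_ ?_
  · refine csSup_le hRne ?_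
    rintro r ⟨y, hy, rfl⟩
    exact ub y hy
  · exact max_le (le_csSup hRbdd memA) (le_csSup hRbdd memB)
end

section
/- Let m denote Lebesgue measure on [0,∞) and let J denote the space of bounded measurable functions f : [0,∞) → ℂ vanishing outside a set of finite measure. For f ∈ J: (i) for every t ∈ (0,1], sup{ |∫₀^∞ f g dm| : g ∈ J with (1/t)∫₀ᵗ g*(s) ds ≤ 1 } = max{ t · esssup|f|, ∫₀^∞ |f| dm }; (ii) for every t ∈ (1,∞), sup{ |∫₀^∞ f g dm| : g ∈ J with ∫₀ᵗ g*(s) ds ≤ 1 } = max{ esssup|f|, (1/t)∫₀^∞ |f| dm }. -/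
open MeasureTheory

/-- The nonincreasing rearrangement of `|f|` for a measurable function `f` on `[0,∞)`:
`f*(x) = sup{ y ∈ [0,∞) : m({t : |f(t)| > y}) > x }`, where `m` is Lebesgue measure
on `[0,∞)`. -/
noncomputable def decRearr (f : ℝ → ℂ) (x : ℝ) : ℝ :=
  sSup {y : ℝ | 0 ≤ y ∧
    ENNReal.ofReal x < (volume.restrict (Set.Ici (0:ℝ))) {t : ℝ | y < ‖f t‖}}

/-- Membership in `J`: the bounded measurable functions on `[0,∞)` vanishing outside a set
of finite measure. -/
def MemJ (f : ℝ → ℂ) : Prop :=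
  Measurable f ∧ (∃ C : ℝ, ∀ t, ‖f t‖ ≤ C) ∧
    (volume.restrict (Set.Ici (0:ℝ))) (Function.support f) < ⊤

/-!
Writing `∫ |f g| = ∫₀^∞ (∫_{|g| > y} |f|) dy` (layer cake with weight `|f|`), the inner integral
is at most `max (‖f‖_∞, ‖f‖₁ / t) · min (t, m{|g| > y})`, and by equimeasurability of `g*` and
`|g|` the integral of `min (t, m{|g| > y})` over `y > 0` is `∫₀ᵗ g*`. Hence
`|∫ f g| ≤ max (‖f‖_∞, ‖f‖₁ / t) · ∫₀ᵗ g*`. Conversely `g = c · 1_B · conj f / |f|` has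
`∫₀ᵗ g* ≤ c · min (t, m B)` and `∫ f g = c ∫_B |f|`: taking `B = supp f` attains the `‖f‖₁ / t`
term, and `B = {|f| > β}` with `β ↑ ‖f‖_∞` approaches the `‖f‖_∞` term.
-/

open Set Filter Function ComplexConjugate
open scoped ENNReal

local notation "μ₊" => volume.restrict (Ici (0:ℝ))

section General

variable {α : Type*} [MeasurableSpace α] {μ : Measure α}

lemma measure_setOf_lt_eq_zero_of_le {F : α → ℝ} {C y : ℝ} (hC : ∀ x, F x ≤ C) (hy : C ≤ y) :
    μ {x | y < F x} = 0 := by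
  simp [fun x => not_lt.2 ((hC x).trans hy)]

lemma measure_setOf_lt_le_of_forall_gt {F : α → ℝ} {y : ℝ} {a : ℝ≥0∞}
    (h : ∀ z, y < z → μ {x | z < F x} ≤ a) : μ {x | y < F x} ≤ a := by
  obtain ⟨u, hu_anti, hyu, hu⟩ := exists_seq_strictAnti_tendsto y
  have hunion : {x | y < F x} = ⋃ n, {x | u n < F x} := by
    ext x
    simp only [mem_iUnion]
    exact ⟨fun hx => (hu.eventually (gt_mem_nhds hx)).exists, fun ⟨n, hn⟩ => (hyu n).trans hn⟩
  have hmono : Monotone fun n => {x | u n < F x} :=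
    fun m n hmn x hx => (hu_anti.antitone hmn).trans_lt hx
  rw [hunion, hmono.measure_iUnion]
  exact iSup_le fun n => h _ (hyu n)

lemma measure_setOf_lt_norm_ne_zero_of_lt_essSup [NeZero μ] {E : Type*} [NormedAddCommGroup E]
    {f : α → E} {β : ℝ} (hβ : β < essSup (fun x => ‖f x‖) μ) : μ {x | β < ‖f x‖} ≠ 0 := by
  intro h
  refine hβ.not_ge (essSup_le_of_ae_le β ?_ (isCoboundedUnder_le_of_le _ fun x => norm_nonneg _))
  simpa [EventuallyLE, ae_iff] using h

lemma lintegral_mul_ofReal_eq_lintegral_setLIntegral_lt {w : α → ℝ≥0∞} (hw : Measurable w)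
    {G : α → ℝ} (hG : Measurable G) (hG0 : 0 ≤ G) :
    ∫⁻ x, w x * ENNReal.ofReal (G x) ∂μ = ∫⁻ y in Ioi 0, ∫⁻ x in {x | y < G x}, w x ∂μ := by
  have hdensity : ∫⁻ x, ENNReal.ofReal (G x) ∂μ.withDensity w =
      ∫⁻ x, w x * ENNReal.ofReal (G x) ∂μ :=
    lintegral_withDensity_eq_lintegral_mul μ hw hG.ennreal_ofReal
  rw [← hdensity, lintegral_eq_lintegral_meas_lt _ (ae_of_all _ hG0) hG.aemeasurable]
  exact lintegral_congr fun y => withDensity_apply _ (hG measurableSet_Ioi)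

lemma setLIntegral_norm_le_max_mul_min {E : Type*} [NormedAddCommGroup E] {f : α → E}
    (hf : Integrable f μ) {M : ℝ} (hM : ∀ᵐ x ∂μ, ‖f x‖ ≤ M) {t : ℝ} (ht : 0 < t) (s : Set α) :
    ∫⁻ x in s, ENNReal.ofReal ‖f x‖ ∂μ ≤
      ENNReal.ofReal (max M ((∫ x, ‖f x‖ ∂μ) / t)) * min (ENNReal.ofReal t) (μ s) := by
  set K := max M ((∫ x, ‖f x‖ ∂μ) / t)
  rcases le_total (ENNReal.ofReal t) (μ s) with hts | hst
  · rw [min_eq_left hts, ← ENNReal.ofReal_mul (le_max_of_le_right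
      (div_nonneg (integral_nonneg fun x => norm_nonneg _) ht.le))]
    calc ∫⁻ x in s, ENNReal.ofReal ‖f x‖ ∂μ
        ≤ ∫⁻ x, ENNReal.ofReal ‖f x‖ ∂μ := setLIntegral_le_lintegral _ _
      _ = ENNReal.ofReal (∫ x, ‖f x‖ ∂μ) :=
        (ofReal_integral_eq_lintegral_ofReal hf.norm (ae_of_all _ fun x => norm_nonneg _)).symm
      _ ≤ ENNReal.ofReal (K * t) := by
        gcongr
        rw [← div_le_iff₀ ht]
        exact le_max_right _ _
  · rw [min_eq_right hst]
    calc ∫⁻ x in s, ENNReal.ofReal ‖f x‖ ∂μ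
        ≤ ∫⁻ _ in s, ENNReal.ofReal K ∂μ := by
          refine lintegral_mono_ae ((ae_restrict_of_ae hM).mono fun x hx => ?_)
          exact ENNReal.ofReal_le_ofReal (hx.trans (le_max_left _ _))
      _ = ENNReal.ofReal K * μ s := setLIntegral_const _ _

end General

section RearrangementOnHalfLine

variable {f g : ℝ → ℂ} {C : ℝ}

lemma MemJ.measurableSet_support (hf : MemJ f) : MeasurableSet (support f) :=
  hf.1 (measurableSet_singleton 0).compl

lemma MemJ.integrable (hf : MemJ f) : Integrable f μ₊ := by
  obtain ⟨hfm, ⟨C, hC⟩, hsupp⟩ := hf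
  refine IntegrableOn.integrable_of_forall_notMem_eq_zero ?_ fun x hx => notMem_support.1 hx
  exact Measure.integrableOn_of_bounded hsupp.ne hfm.aestronglyMeasurable (ae_of_all _ hC)

lemma MemJ.measure_setOf_lt_norm_lt_top (hf : MemJ f) {y : ℝ} (hy : 0 ≤ y) :
    μ₊ {u | y < ‖f u‖} < ⊤ :=
  (measure_mono fun u (hu : y < ‖f u‖) => norm_pos_iff.1 (hy.trans_lt hu)).trans_lt hf.2.2

lemma decRearr_nonneg (g : ℝ → ℂ) (x : ℝ) : 0 ≤ decRearr g x :=
  Real.sSup_nonneg fun _ hy => hy.1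

lemma bddAbove_decRearr_set (hC : ∀ u, ‖g u‖ ≤ C) (x : ℝ) :
    BddAbove {y : ℝ | 0 ≤ y ∧ ENNReal.ofReal x < μ₊ {u | y < ‖g u‖}} := by
  refine ⟨C, fun y hy => le_of_not_gt fun hCy => ?_⟩
  exact not_lt_zero (measure_setOf_lt_eq_zero_of_le hC hCy.le ▸ hy.2)

lemma decRearr_antitone (hC : ∀ u, ‖g u‖ ≤ C) : Antitone (decRearr g) :=
  fun a _ hab => Real.sSup_le (fun _ hy => le_csSup (bddAbove_decRearr_set hC a)
    ⟨hy.1, (ENNReal.ofReal_le_ofReal hab).trans_lt hy.2⟩) (decRearr_nonneg g a)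

lemma lt_decRearr_iff (hC : ∀ u, ‖g u‖ ≤ C) {x y : ℝ} (hy : 0 ≤ y) :
    y < decRearr g x ↔ ENNReal.ofReal x < μ₊ {u | y < ‖g u‖} := by
  constructor
  · intro hlt
    have hne : {z : ℝ | 0 ≤ z ∧ ENNReal.ofReal x < μ₊ {u | z < ‖g u‖}}.Nonempty :=
      nonempty_iff_ne_empty.2 fun he => hy.not_gt (by rwa [decRearr, he, Real.sSup_empty] at hlt)
    obtain ⟨z, hz, hyz⟩ := exists_lt_of_lt_csSup hne hlt
    exact hz.2.trans_le (measure_mono fun u (hu : z < ‖g u‖) => hyz.trans hu)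
  · intro hlt
    by_contra hle
    refine hlt.not_ge (measure_setOf_lt_le_of_forall_gt fun z hyz => le_of_not_gt fun hz => ?_)
    exact (not_le.2 hyz) ((le_csSup (bddAbove_decRearr_set hC x) ⟨hy.trans hyz.le, hz⟩).trans
      (not_lt.1 hle))

lemma MemJ.volume_setOf_lt_decRearr_inter_Ioo (hg : MemJ g) {y : ℝ} (hy : 0 < y) (t : ℝ) :
    volume ({s | y < decRearr g s} ∩ Ioo 0 t) = min (ENNReal.ofReal t) (μ₊ {u | y < ‖g u‖}) := by
  obtain ⟨C, hC⟩ := hg.2.1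
  have hfin := (hg.measure_setOf_lt_norm_lt_top hy.le).ne
  set d := (μ₊ {u | y < ‖g u‖}).toReal
  have hset : {s | y < decRearr g s} ∩ Ioo 0 t = Iio d ∩ Ioo 0 t := by
    ext s
    simp only [mem_inter_iff, mem_Iio, and_congr_left_iff]
    intro hs
    rw [← ENNReal.ofReal_lt_ofReal_iff_of_nonneg hs.1.le, ENNReal.ofReal_toReal hfin]
    exact lt_decRearr_iff hC hy.le
  rw [hset, Iio_inter_Ioo, Real.volume_Ioo, sub_zero, ENNReal.ofReal_min, min_comm,
    ENNReal.ofReal_toReal hfin]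

lemma MemJ.lintegral_min_measure_eq_integral_decRearr (hg : MemJ g) {t : ℝ} (ht : 0 ≤ t) :
    ∫⁻ y in Ioi 0, min (ENNReal.ofReal t) (μ₊ {u | y < ‖g u‖}) =
      ENNReal.ofReal (∫ s in (0:ℝ)..t, decRearr g s) := by
  obtain ⟨C, hC⟩ := hg.2.1
  have hmeas : Measurable (decRearr g) := (decRearr_antitone hC).measurable
  rw [intervalIntegral.integral_of_le ht, integral_Ioc_eq_integral_Ioo,
    ofReal_integral_eq_lintegral_ofReal
      ((decRearr_antitone hC).intervalIntegrable.1.mono_set Ioo_subset_Ioc_self)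
      (ae_of_all _ (decRearr_nonneg g)),
    lintegral_eq_lintegral_meas_lt _ (ae_of_all _ (decRearr_nonneg g)) hmeas.aemeasurable]
  refine setLIntegral_congr_fun measurableSet_Ioi fun y hy => ?_
  have hlevel : MeasurableSet {s | y < decRearr g s} := hmeas measurableSet_Ioi
  rw [Measure.restrict_apply hlevel, hg.volume_setOf_lt_decRearr_inter_Ioo hy]

lemma MemJ.integral_decRearr_le (hg : MemJ g) (hC : ∀ u, ‖g u‖ ≤ C) {t : ℝ} (ht : 0 ≤ t) :
    ∫ s in (0:ℝ)..t, decRearr g s ≤ C * min t (μ₊ (support g)).toReal := by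
  have hC0 : 0 ≤ C := (norm_nonneg _).trans (hC 0)
  set b := min (ENNReal.ofReal t) (μ₊ (support g))
  rw [← ENNReal.ofReal_le_ofReal_iff (by positivity),
    ← hg.lintegral_min_measure_eq_integral_decRearr ht, ENNReal.ofReal_mul hC0,
    ENNReal.ofReal_min, ENNReal.ofReal_toReal hg.2.2.ne]
  calc ∫⁻ y in Ioi 0, min (ENNReal.ofReal t) (μ₊ {u | y < ‖g u‖})
      ≤ ∫⁻ y in Ioi 0, (Iio C).indicator (fun _ => b) y := by
        refine setLIntegral_mono' measurableSet_Ioi fun y (hy : 0 < y) => ?_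
        by_cases hyC : y < C
        · rw [indicator_of_mem (mem_Iio.2 hyC)]
          exact min_le_min_left _
            (measure_mono fun u (hu : y < ‖g u‖) => norm_pos_iff.1 (hy.trans hu))
        · rw [indicator_of_notMem (mt mem_Iio.1 hyC),
            measure_setOf_lt_eq_zero_of_le hC (not_lt.1 hyC)]
          exact min_le_right _ _
    _ = ENNReal.ofReal C * b := by
        rw [lintegral_indicator_const measurableSet_Iio, Measure.restrict_apply measurableSet_Iio,
          Iio_inter_Ioi, Real.volume_Ioo, sub_zero, mul_comm]

lemma norm_integral_mul_le (hf : MemJ f) (hg : MemJ g) {t : ℝ} (ht : 0 < t) :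
    ‖∫ u in Ici 0, f u * g u‖ ≤
      max (essSup (fun u => ‖f u‖) μ₊) ((∫ u in Ici 0, ‖f u‖) / t) *
        ∫ s in (0:ℝ)..t, decRearr g s := by
  set K := max (essSup (fun u => ‖f u‖) μ₊) ((∫ u in Ici 0, ‖f u‖) / t)
  have hK : 0 ≤ K := le_max_of_le_right (div_nonneg (integral_nonneg fun _ => norm_nonneg _) ht.le)
  obtain ⟨C, hC⟩ := hf.2.1
  have hM : ∀ᵐ u ∂μ₊, ‖f u‖ ≤ essSup (fun u => ‖f u‖) μ₊ := ae_le_essSup (isBoundedUnder_of ⟨C, hC⟩)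
  refine (norm_integral_le_integral_norm _).trans ?_
  rw [← ENNReal.ofReal_le_ofReal_iff (mul_nonneg hK (intervalIntegral.integral_nonneg ht.le
      fun s _ => decRearr_nonneg g s)),
    ofReal_integral_eq_lintegral_ofReal (hg.integrable.bdd_mul hf.1.aestronglyMeasurable
      (ae_of_all _ hC)).norm (ae_of_all _ fun _ => norm_nonneg _),
    ENNReal.ofReal_mul hK, ← hg.lintegral_min_measure_eq_integral_decRearr ht.le,
    ← lintegral_const_mul' _ _ ENNReal.ofReal_ne_top]
  simp only [norm_mul, ENNReal.ofReal_mul (norm_nonneg _)]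
  rw [lintegral_mul_ofReal_eq_lintegral_setLIntegral_lt hf.1.norm.ennreal_ofReal hg.1.norm
    fun _ => norm_nonneg _]
  exact lintegral_mono fun y => setLIntegral_norm_le_max_mul_min hf.integrable hM ht _

lemma norm_conj_div_norm_le_one (z : ℂ) : ‖conj z / ‖z‖‖ ≤ 1 := by
  rw [norm_div, Complex.norm_conj, Complex.norm_real, norm_norm]
  exact div_self_le_one _

lemma mul_conj_div_norm (z : ℂ) : z * (conj z / ‖z‖) = ‖z‖ := by
  rw [mul_div_assoc', Complex.mul_conj', sq, mul_self_div_self]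

noncomputable def phaseIndicator (c : ℝ) (B : Set ℝ) (f : ℝ → ℂ) : ℝ → ℂ :=
  B.indicator fun u => (c : ℂ) * (conj (f u) / ‖f u‖)

section PhaseIndicator

variable {c : ℝ} {B : Set ℝ}

lemma norm_phaseIndicator_le (hc : 0 ≤ c) (u : ℝ) : ‖phaseIndicator c B f u‖ ≤ c := by
  by_cases hu : u ∈ B
  · simp only [phaseIndicator, indicator_of_mem hu, norm_mul, Complex.norm_real,
      Real.norm_of_nonneg hc]
    exact mul_le_of_le_one_right hc (norm_conj_div_norm_le_one _)
  · simpa [phaseIndicator, hu] using hc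

lemma memJ_phaseIndicator (hf : Measurable f) (hB : MeasurableSet B) (hBfin : μ₊ B < ⊤)
    (hc : 0 ≤ c) : MemJ (phaseIndicator c B f) :=
  ⟨Measurable.indicator (by fun_prop) hB, ⟨c, norm_phaseIndicator_le hc⟩,
    (measure_mono support_indicator_subset).trans_lt hBfin⟩

lemma integral_decRearr_phaseIndicator_le (hf : Measurable f) (hB : MeasurableSet B)
    (hBfin : μ₊ B < ⊤) (hc : 0 ≤ c) {t : ℝ} (ht : 0 ≤ t) :
    ∫ s in (0:ℝ)..t, decRearr (phaseIndicator c B f) s ≤ c * min t (μ₊ B).toReal :=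
  calc ∫ s in (0:ℝ)..t, decRearr (phaseIndicator c B f) s
      ≤ c * min t (μ₊ (support (phaseIndicator c B f))).toReal :=
        (memJ_phaseIndicator hf hB hBfin hc).integral_decRearr_le (norm_phaseIndicator_le hc) ht
    _ ≤ c * min t (μ₊ B).toReal := by
        gcongr
        exacts [hBfin.ne, support_indicator_subset]

lemma norm_integral_mul_phaseIndicator (hB : MeasurableSet B) (hc : 0 ≤ c) :
    ‖∫ u in Ici 0, f u * phaseIndicator c B f u‖ = c * ∫ u in B, ‖f u‖ ∂μ₊ := by
  have hpair : ∀ u,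
      f u * phaseIndicator c B f u = ((B.indicator (fun u => c * ‖f u‖) u : ℝ) : ℂ) := by
    intro u
    by_cases hu : u ∈ B <;> simp [phaseIndicator, hu, mul_left_comm (f u), mul_conj_div_norm]
  simp_rw [hpair]
  rw [integral_complex_ofReal, integral_indicator hB, integral_const_mul, Complex.norm_real,
    Real.norm_of_nonneg (mul_nonneg hc (integral_nonneg fun _ => norm_nonneg _))]

end PhaseIndicator

lemma MemJ.exists_integral_decRearr_le_norm_integral_mul_eq (hf : MemJ f) {t κ : ℝ} (ht : 0 < t)
    (hκ : 0 ≤ κ) :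
    ∃ g, MemJ g ∧ ∫ s in (0:ℝ)..t, decRearr g s ≤ κ ∧
      ‖∫ u in Ici 0, f u * g u‖ = κ * ((∫ u in Ici 0, ‖f u‖) / t) := by
  have hc : 0 ≤ κ / t := div_nonneg hκ ht.le
  refine ⟨phaseIndicator (κ / t) (support f) f,
    memJ_phaseIndicator hf.1 hf.measurableSet_support hf.2.2 hc, ?_, ?_⟩
  · calc ∫ s in (0:ℝ)..t, decRearr (phaseIndicator (κ / t) (support f) f) s
        ≤ κ / t * min t (μ₊ (support f)).toReal :=
          integral_decRearr_phaseIndicator_le hf.1 hf.measurableSet_support hf.2.2 hc ht.le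
      _ ≤ κ / t * t := by gcongr; exact min_le_left _ _
      _ = κ := div_mul_cancel₀ κ ht.ne'
  · rw [norm_integral_mul_phaseIndicator hf.measurableSet_support hc,
      setIntegral_eq_integral_of_forall_compl_eq_zero fun u hu => by
        rw [notMem_support.1 hu, norm_zero]]
    ring

lemma MemJ.exists_integral_decRearr_le_mul_le_norm_integral_mul (hf : MemJ f) {β : ℝ}
    (hβ : 0 ≤ β) (hβM : β < essSup (fun u => ‖f u‖) μ₊) {t κ : ℝ} (ht : 0 < t) (hκ : 0 ≤ κ) :
    ∃ g, MemJ g ∧ ∫ s in (0:ℝ)..t, decRearr g s ≤ κ ∧ κ * β ≤ ‖∫ u in Ici 0, f u * g u‖ := by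
  set B := {u | β < ‖f u‖}
  have hB : MeasurableSet B := hf.1.norm measurableSet_Ioi
  have hBfin : μ₊ B < ⊤ := hf.measure_setOf_lt_norm_lt_top hβ
  have : NeZero μ₊ := ⟨by simp⟩
  have hb : 0 < (μ₊ B).toReal :=
    ENNReal.toReal_pos (measure_setOf_lt_norm_ne_zero_of_lt_essSup hβM) hBfin.ne
  set m := min t (μ₊ B).toReal
  have hm : 0 < m := lt_min ht hb
  have hc : 0 ≤ κ / m := div_nonneg hκ hm.le
  refine ⟨phaseIndicator (κ / m) B f, memJ_phaseIndicator hf.1 hB hBfin hc,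
    (integral_decRearr_phaseIndicator_le hf.1 hB hBfin hc ht.le).trans
      (div_mul_cancel₀ κ hm.ne').le, ?_⟩
  have hβB : β * (μ₊ B).toReal ≤ ∫ u in B, ‖f u‖ ∂μ₊ :=
    setIntegral_ge_of_const_le_real hB hBfin.ne (fun _ hu => le_of_lt hu)
      hf.integrable.norm.integrableOn
  rw [norm_integral_mul_phaseIndicator hB hc]
  calc κ * β = κ / m * (β * m) := by field_simp
    _ ≤ κ / m * (β * (μ₊ B).toReal) := by gcongr; exact min_le_right _ _
    _ ≤ κ / m * ∫ u in B, ‖f u‖ ∂μ₊ := by gcongr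

lemma MemJ.sSup_norm_integral_mul_eq (hf : MemJ f) {t κ : ℝ} (ht : 0 < t) (hκ : 0 < κ) :
    sSup {r | ∃ g, MemJ g ∧ ∫ s in (0:ℝ)..t, decRearr g s ≤ κ ∧
        r = ‖∫ u in Ici 0, f u * g u‖} =
      κ * max (essSup (fun u => ‖f u‖) μ₊) ((∫ u in Ici 0, ‖f u‖) / t) := by
  set S := {r | ∃ g, MemJ g ∧ ∫ s in (0:ℝ)..t, decRearr g s ≤ κ ∧
    r = ‖∫ u in Ici 0, f u * g u‖}
  set M := essSup (fun u => ‖f u‖) μ₊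
  set I := ∫ u in Ici 0, ‖f u‖
  have hK : 0 ≤ max M (I / t) :=
    le_max_of_le_right (div_nonneg (integral_nonneg fun _ => norm_nonneg _) ht.le)
  have hub : ∀ r ∈ S, r ≤ κ * max M (I / t) := by
    rintro r ⟨g, hg, hgκ, rfl⟩
    rw [mul_comm]
    exact (norm_integral_mul_le hf hg ht).trans (mul_le_mul_of_nonneg_left hgκ hK)
  have hbdd : BddAbove S := ⟨_, hub⟩
  have hI : κ * (I / t) ∈ S := by
    obtain ⟨g, hg, hgκ, hgI⟩ := hf.exists_integral_decRearr_le_norm_integral_mul_eq ht hκ.le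
    exact ⟨g, hg, hgκ, hgI.symm⟩
  refine le_antisymm (csSup_le ⟨_, hI⟩ hub) ?_
  rw [mul_max_of_nonneg _ _ hκ.le]
  refine max_le ?_ (le_csSup hbdd hI)
  rw [← le_div_iff₀' hκ]
  refine le_of_forall_lt_imp_le_of_dense fun β hβ => ?_
  rw [le_div_iff₀' hκ]
  rcases lt_or_ge β 0 with hβ0 | hβ0
  · exact (mul_neg_of_pos_of_neg hκ hβ0).le.trans
      (Real.sSup_nonneg fun _ ⟨_, _, _, hr⟩ => hr ▸ norm_nonneg _)
  · obtain ⟨g, hg, hgκ, hgβ⟩ :=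
      hf.exists_integral_decRearr_le_mul_le_norm_integral_mul hβ0 hβ ht hκ.le
    exact hgβ.trans (le_csSup hbdd ⟨g, hg, hgκ, rfl⟩)

end RearrangementOnHalfLine

/-- The dual norms of the Ky Fan `t`-th norms on `J = J(L^∞[0,∞))`: for `f ∈ J`,
(i) for `t ∈ (0,1]` the dual of `g ↦ (1/t)∫₀ᵗ g*` is `max{t⬝esssup|f|, ∫|f|}`;
(ii) for `t ∈ (1,∞)` the dual of `g ↦ ∫₀ᵗ g*` is `max{esssup|f|, (1/t)∫|f|}`. -/
theorem dual_kyFan_norms (f : ℝ → ℂ) (hf : MemJ f) :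
    (∀ t : ℝ, t ∈ Set.Ioc (0:ℝ) 1 →
      sSup {r : ℝ | ∃ g : ℝ → ℂ, MemJ g ∧ (1 / t) * (∫ s in (0:ℝ)..t, decRearr g s) ≤ 1 ∧
          r = ‖∫ u in Set.Ici (0:ℝ), f u * g u‖} =
        max (t * essSup (fun u => ‖f u‖) (volume.restrict (Set.Ici (0:ℝ))))
          (∫ u in Set.Ici (0:ℝ), ‖f u‖)) ∧
    (∀ t : ℝ, t ∈ Set.Ioi (1:ℝ) →
      sSup {r : ℝ | ∃ g : ℝ → ℂ, MemJ g ∧ (∫ s in (0:ℝ)..t, decRearr g s) ≤ 1 ∧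
          r = ‖∫ u in Set.Ici (0:ℝ), f u * g u‖} =
        max (essSup (fun u => ‖f u‖) (volume.restrict (Set.Ici (0:ℝ))))
          ((1 / t) * ∫ u in Set.Ici (0:ℝ), ‖f u‖)) := by
  refine ⟨fun t ⟨ht, _⟩ => ?_, fun t ht => ?_⟩
  · simp only [one_div_mul_eq_div, div_le_one ht]
    rw [hf.sSup_norm_integral_mul_eq ht ht, mul_max_of_nonneg _ _ ht.le, mul_div_cancel₀ _ ht.ne']
  · rw [hf.sSup_norm_integral_mul_eq (zero_lt_one.trans ht) one_pos, one_mul, one_div_mul_eq_div]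
end

section
/- Let N be a symmetric gauge norm on c₀₀, the space of finitely supported complex sequences, and define the dual norm N#(x) = sup{ |Σ_n x_n y_n| : y ∈ c₀₀, N(y) ≤ 1 }. Then N# is finite on c₀₀ and is again a symmetric gauge norm on c₀₀, and the second dual satisfies N##(x) = N(x) for all x ∈ c₀₀. Moreover, if N is normalized then N# is normalized. -/
/-- The coordinatewise absolute value of a finitely supported complex sequence. -/
noncomputable def absF (x : ℕ →₀ ℂ) : ℕ →₀ ℂ :=
  x.mapRange (fun z => (‖z‖ : ℂ)) (by simp)

/-- `N` is a symmetric gauge norm on `c₀₀`, the space of finitely supported complex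
sequences. -/
structure IsSymmGaugeNorm (N : (ℕ →₀ ℂ) → ℝ) : Prop where
  add_le : ∀ x y : ℕ →₀ ℂ, N (x + y) ≤ N x + N y
  smul_eq : ∀ (c : ℂ) (x : ℕ →₀ ℂ), N (c • x) = ‖c‖ * N x
  eq_zero : ∀ x : ℕ →₀ ℂ, N x = 0 → x = 0
  gauge : ∀ x : ℕ →₀ ℂ, N (absF x) = N x
  symm : ∀ (σ : Equiv.Perm ℕ) (x : ℕ →₀ ℂ), N (Finsupp.equivMapDomain σ x) = N x

/-- The dual norm of `N` on `c₀₀` with respect to the pairing `(x, y) ↦ Σ_n x_n y_n`. -/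
noncomputable def dualNorm (N : (ℕ →₀ ℂ) → ℝ) (x : ℕ →₀ ℂ) : ℝ :=
  sSup {r : ℝ | ∃ y : ℕ →₀ ℂ, N y ≤ 1 ∧ r = ‖∑ n ∈ x.support, x n * y n‖}

/-!
Pairing against a fixed `y` is linear in `x`, so `N#` is a seminorm, and testing against unit
vectors shows that it is definite. The gauge and permutation invariance of `N` pass to `N#`
because the phase twist `yₙ ↦ e^{± i arg xₙ} yₙ` and the permutation `y ↦ y ∘ σ` preserve `N`;
the coordinate bound `‖yₙ‖ N(e₀) ≤ N y` makes the supremum finite.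

For `N## = N`, one inequality is `|⟨x, y⟩| ≤ N#(y) N(x)`. For the other, Hahn–Banach gives a
functional `g` of norm one on `(c₀₀, N)` with `g x = N x`; its coefficients `g eₙ` on the support
of `x` form a `y` with `⟨x, y⟩ = N x` and `N# y ≤ 1`, since `N` does not increase when coordinates
are deleted.
-/

open Finsupp

namespace IsSymmGaugeNorm

variable {N : (ℕ →₀ ℂ) → ℝ}

noncomputable def toSeminorm (hN : IsSymmGaugeNorm N) : Seminorm ℂ (ℕ →₀ ℂ) :=
  Seminorm.of N hN.add_le hN.smul_eq

lemma nonneg (hN : IsSymmGaugeNorm N) (x : ℕ →₀ ℂ) : 0 ≤ N x :=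
  apply_nonneg hN.toSeminorm x

lemma map_zero (hN : IsSymmGaugeNorm N) : N 0 = 0 :=
  _root_.map_zero hN.toSeminorm

lemma eq_of_forall_norm_apply_eq (hN : IsSymmGaugeNorm N) {x y : ℕ →₀ ℂ}
    (h : ∀ n, ‖x n‖ = ‖y n‖) : N x = N y := by
  rw [← hN.gauge x, ← hN.gauge y]
  congr 1
  ext n
  simp [absF, h n]

/-- `x.filter p` is the average of `x` and of `x` with the signs outside `p` flipped, and
the latter has the same gauge norm as `x`. -/
lemma filter_le (hN : IsSymmGaugeNorm N) (p : ℕ → Prop) [DecidablePred p] (x : ℕ →₀ ℂ) :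
    N (x.filter p) ≤ N x := by
  set x' := x.filter p - x.filter (¬ p ·)
  have hx' : N x' = N x := hN.eq_of_forall_norm_apply_eq fun n => by
    by_cases hn : p n <;> simp [x', hn]
  have hsplit : x.filter p = (2 : ℂ)⁻¹ • (x + x') := by
    conv_rhs => rw [← filter_add_filter_not x p]
    ext n
    by_cases hn : p n <;> simp [x', hn]; ring
  calc N (x.filter p) = 2⁻¹ * N (x + x') := by rw [hsplit, hN.smul_eq]; norm_num
    _ ≤ 2⁻¹ * (N x + N x') := by gcongr; exact hN.add_le x x'
    _ = N x := by rw [hx']; ring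

lemma single_eq (hN : IsSymmGaugeNorm N) (n : ℕ) (c : ℂ) :
    N (single n c) = ‖c‖ * N (single 0 1) := by
  rw [← smul_single_one, hN.smul_eq, ← hN.symm (Equiv.swap n 0), equivMapDomain_single,
    Equiv.swap_apply_left]

lemma single_zero_one_pos (hN : IsSymmGaugeNorm N) : 0 < N (single 0 1) :=
  (hN.nonneg _).lt_of_ne fun h => one_ne_zero (single_eq_zero.mp (hN.eq_zero _ h.symm))

lemma norm_apply_le_div (hN : IsSymmGaugeNorm N) (x : ℕ →₀ ℂ) (n : ℕ) :
    ‖x n‖ ≤ N x / N (single 0 1) := by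
  rw [le_div_iff₀ hN.single_zero_one_pos]
  have h := hN.filter_le (· = n) x
  rwa [filter_eq', hN.single_eq] at h

lemma pointwise_smul_eq (hN : IsSymmGaugeNorm N) {u : ℕ → ℂ} (hu : ∀ n, ‖u n‖ = 1)
    (y : ℕ →₀ ℂ) : N (u • y) = N y :=
  hN.eq_of_forall_norm_apply_eq fun n => by simp [hu n]

end IsSymmGaugeNorm

/-- The second argument is a plain function so that every linear functional on `c₀₀` is a
pairing (`map_eq_pairing`). -/
def pairing (x : ℕ →₀ ℂ) (y : ℕ → ℂ) : ℂ := x.sum fun n a => a * y n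

lemma pairing_eq_sum_of_subset {x : ℕ →₀ ℂ} {s : Finset ℕ} (h : x.support ⊆ s) (y : ℕ → ℂ) :
    pairing x y = ∑ n ∈ s, x n * y n :=
  sum_of_support_subset x h _ fun _ _ => zero_mul _

lemma pairing_comm (x y : ℕ →₀ ℂ) : pairing x y = pairing y x := by
  rw [pairing_eq_sum_of_subset (Finset.subset_union_left (s₂ := y.support)),
    pairing_eq_sum_of_subset (Finset.subset_union_right (s₁ := x.support))]
  simp_rw [mul_comm]

@[simp]
lemma pairing_zero_right (x : ℕ →₀ ℂ) : pairing x 0 = 0 := by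
  simp [pairing]

@[simp]
lemma pairing_add_left (x x' : ℕ →₀ ℂ) (y : ℕ → ℂ) :
    pairing (x + x') y = pairing x y + pairing x' y :=
  sum_add_index' (fun _ => zero_mul _) fun _ _ _ => add_mul _ _ _

@[simp]
lemma pairing_smul_left (c : ℂ) (x : ℕ →₀ ℂ) (y : ℕ → ℂ) :
    pairing (c • x) y = c * pairing x y := by
  rw [pairing, sum_smul_index' fun _ => zero_mul _, pairing, mul_sum]
  simp_rw [smul_eq_mul, mul_assoc]

@[simp]
lemma pairing_single_left (n : ℕ) (c : ℂ) (y : ℕ → ℂ) : pairing (single n c) y = c * y n :=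
  sum_single_index (zero_mul _)

lemma pairing_equivMapDomain (σ : Equiv.Perm ℕ) (x y : ℕ →₀ ℂ) :
    pairing (equivMapDomain σ x) (equivMapDomain σ y) = pairing x y := by
  simp [pairing, sum_equivMapDomain]

lemma map_eq_pairing {F : Type*} [FunLike F (ℕ →₀ ℂ) ℂ] [LinearMapClass F ℂ (ℕ →₀ ℂ) ℂ]
    (g : F) (z : ℕ →₀ ℂ) :
    g z = pairing z fun n => g (single n 1) := by
  conv_lhs => rw [← sum_single z]
  rw [map_finsuppSum]
  exact sum_congr fun n _ => by rw [← smul_single_one, map_smul, smul_eq_mul]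

lemma pairing_filter (p : ℕ → Prop) [DecidablePred p] (z : ℕ →₀ ℂ) (y : ℕ → ℂ) :
    pairing (z.filter p) y = pairing z fun n => if p n then y n else 0 := by
  rw [pairing_eq_sum_of_subset (Finset.filter_subset p z.support),
    pairing_eq_sum_of_subset subset_rfl]
  refine Finset.sum_congr rfl fun n _ => ?_
  by_cases hn : p n <;> simp [hn]

open Complex in
lemma pairing_absF (x : ℕ →₀ ℂ) (y : ℕ → ℂ) :
    pairing (absF x) y = pairing x fun n => exp (-(arg (x n) * I)) * y n := by
  rw [pairing_eq_sum_of_subset (x := absF x) (s := x.support) support_mapRange,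
    pairing_eq_sum_of_subset subset_rfl]
  refine Finset.sum_congr rfl fun n _ => ?_
  conv_rhs => rw [← norm_mul_exp_arg_mul_I (x n)]
  rw [absF, mapRange_apply, mul_assoc, ← mul_assoc (exp _), ← exp_add]
  simp

open Complex in
lemma pairing_eq_pairing_absF (x : ℕ →₀ ℂ) (y : ℕ → ℂ) :
    pairing x y = pairing (absF x) fun n => exp (arg (x n) * I) * y n := by
  rw [pairing_absF]
  congr 1
  ext n
  rw [← mul_assoc, ← exp_add]
  simp

lemma pairing_indicator_eq_map_filter {F : Type*} [FunLike F (ℕ →₀ ℂ) ℂ]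
    [LinearMapClass F ℂ (ℕ →₀ ℂ) ℂ] (g : F) (s : Finset ℕ) (z : ℕ →₀ ℂ) :
    pairing z (indicator s fun n _ => g (single n 1)) = g (z.filter (· ∈ s)) := by
  rw [map_eq_pairing g (z.filter _), pairing_filter]
  congr 1
  ext n
  simp [indicator_apply]

namespace IsSymmGaugeNorm

variable {N : (ℕ →₀ ℂ) → ℝ}

lemma bddAbove_norm_pairing (hN : IsSymmGaugeNorm N) (x : ℕ →₀ ℂ) :
    BddAbove {r : ℝ | ∃ y : ℕ →₀ ℂ, N y ≤ 1 ∧ r = ‖pairing x y‖} := by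
  refine ⟨∑ n ∈ x.support, ‖x n‖ * (1 / N (single 0 1)), ?_⟩
  rintro _ ⟨y, hy, rfl⟩
  rw [pairing_eq_sum_of_subset subset_rfl]
  refine norm_sum_le_of_le _ fun n _ => ?_
  rw [norm_mul]
  gcongr
  exact (hN.norm_apply_le_div y n).trans (div_le_div_of_nonneg_right hy (hN.nonneg _))

lemma norm_pairing_le_dualNorm (hN : IsSymmGaugeNorm N) (x : ℕ →₀ ℂ) {y : ℕ →₀ ℂ}
    (hy : N y ≤ 1) : ‖pairing x y‖ ≤ dualNorm N x :=
  le_csSup (hN.bddAbove_norm_pairing x) ⟨y, hy, rfl⟩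

lemma dualNorm_le (hN : IsSymmGaugeNorm N) {x : ℕ →₀ ℂ} {M : ℝ}
    (h : ∀ y : ℕ →₀ ℂ, N y ≤ 1 → ‖pairing x y‖ ≤ M) : dualNorm N x ≤ M :=
  csSup_le ⟨_, 0, by simp [hN.map_zero], rfl⟩ fun _ ⟨y, hy, hr⟩ => hr ▸ h y hy

lemma dualNorm_nonneg (hN : IsSymmGaugeNorm N) (x : ℕ →₀ ℂ) : 0 ≤ dualNorm N x := by
  simpa using hN.norm_pairing_le_dualNorm x (y := 0) (by simp [hN.map_zero])

lemma norm_pairing_le (hN : IsSymmGaugeNorm N) (x y : ℕ →₀ ℂ) :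
    ‖pairing x y‖ ≤ dualNorm N x * N y := by
  rcases (hN.nonneg y).eq_or_lt with hy | hy
  · simp [hN.eq_zero y hy.symm, hN.map_zero]
  have h := hN.norm_pairing_le_dualNorm x (y := (N y : ℂ)⁻¹ • y)
    (by simp [hN.smul_eq, abs_of_pos hy, hy.ne'])
  rw [pairing_comm, pairing_smul_left, pairing_comm, norm_mul, norm_inv, Complex.norm_real,
    Real.norm_of_nonneg hy.le, inv_mul_le_iff₀ hy] at h
  linarith

lemma dualNorm_le_of_forall_exists_pairing_eq (hN : IsSymmGaugeNorm N) {x x' : ℕ →₀ ℂ}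
    (h : ∀ y : ℕ →₀ ℂ, ∃ y' : ℕ →₀ ℂ, N y' ≤ N y ∧ pairing x y = pairing x' y') :
    dualNorm N x ≤ dualNorm N x' :=
  hN.dualNorm_le fun y hy => by
    obtain ⟨y', hy', hxy⟩ := h y
    exact hxy ▸ hN.norm_pairing_le_dualNorm x' (hy'.trans hy)

lemma dualNorm_add_le (hN : IsSymmGaugeNorm N) (x x' : ℕ →₀ ℂ) :
    dualNorm N (x + x') ≤ dualNorm N x + dualNorm N x' :=
  hN.dualNorm_le fun y hy => by
    rw [pairing_add_left]
    exact (norm_add_le _ _).trans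
      (add_le_add (hN.norm_pairing_le_dualNorm x hy) (hN.norm_pairing_le_dualNorm x' hy))

lemma dualNorm_smul_le (hN : IsSymmGaugeNorm N) (c : ℂ) (x : ℕ →₀ ℂ) :
    dualNorm N (c • x) ≤ ‖c‖ * dualNorm N x :=
  hN.dualNorm_le fun y hy => by
    rw [pairing_smul_left, norm_mul]
    gcongr
    exact hN.norm_pairing_le_dualNorm x hy

lemma dualNorm_zero (hN : IsSymmGaugeNorm N) : dualNorm N 0 = 0 :=
  le_antisymm (by simpa using hN.dualNorm_smul_le 0 0) (hN.dualNorm_nonneg 0)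

noncomputable def dualSeminorm (hN : IsSymmGaugeNorm N) : Seminorm ℂ (ℕ →₀ ℂ) :=
  Seminorm.ofSMulLE (dualNorm N) hN.dualNorm_zero hN.dualNorm_add_le hN.dualNorm_smul_le

lemma dualNorm_eq_zero (hN : IsSymmGaugeNorm N) {x : ℕ →₀ ℂ} (h : dualNorm N x = 0) :
    x = 0 := by
  ext n
  have hn := hN.norm_pairing_le x (single n 1)
  rw [pairing_comm, pairing_single_left, one_mul, h, zero_mul] at hn
  exact norm_le_zero_iff.mp hn

open Complex in
lemma dualNorm_absF (hN : IsSymmGaugeNorm N) (x : ℕ →₀ ℂ) :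
    dualNorm N (absF x) = dualNorm N x := by
  refine le_antisymm (hN.dualNorm_le_of_forall_exists_pairing_eq fun y => ?_)
    (hN.dualNorm_le_of_forall_exists_pairing_eq fun y => ?_)
  · refine ⟨(fun n => exp (-(arg (x n) * I))) • y,
      (hN.pointwise_smul_eq (fun n => by simp [norm_exp]) y).le, ?_⟩
    rw [pairing_absF, coe_pointwise_smul]
    rfl
  · refine ⟨(fun n => exp (arg (x n) * I)) • y,
      (hN.pointwise_smul_eq (fun n => by simp [norm_exp]) y).le, ?_⟩
    rw [pairing_eq_pairing_absF, coe_pointwise_smul]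
    rfl

lemma dualNorm_equivMapDomain (hN : IsSymmGaugeNorm N) (σ : Equiv.Perm ℕ) (x : ℕ →₀ ℂ) :
    dualNorm N (equivMapDomain σ x) = dualNorm N x := by
  refine le_antisymm (hN.dualNorm_le_of_forall_exists_pairing_eq fun y => ?_)
    (hN.dualNorm_le_of_forall_exists_pairing_eq fun y => ?_)
  · refine ⟨equivMapDomain σ.symm y, (hN.symm _ y).le, ?_⟩
    rw [← pairing_equivMapDomain σ x]
    congr
    ext n
    simp
  · exact ⟨equivMapDomain σ y, (hN.symm σ y).le, (pairing_equivMapDomain σ x y).symm⟩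

theorem isSymmGaugeNorm_dualNorm (hN : IsSymmGaugeNorm N) : IsSymmGaugeNorm (dualNorm N) where
  add_le := hN.dualNorm_add_le
  smul_eq := map_smul_eq_mul hN.dualSeminorm
  eq_zero _ := hN.dualNorm_eq_zero
  gauge := hN.dualNorm_absF
  symm := hN.dualNorm_equivMapDomain

lemma dualNorm_dualNorm_le (hN : IsSymmGaugeNorm N) (x : ℕ →₀ ℂ) :
    dualNorm (dualNorm N) x ≤ N x :=
  hN.isSymmGaugeNorm_dualNorm.dualNorm_le fun y hy => calc
    ‖pairing x y‖ = ‖pairing y x‖ := by rw [pairing_comm]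
    _ ≤ dualNorm N y * N x := hN.norm_pairing_le y x
    _ ≤ N x := mul_le_of_le_one_left (hN.nonneg x) hy

lemma le_dualNorm_dualNorm (hN : IsSymmGaugeNorm N) (x : ℕ →₀ ℂ) :
    N x ≤ dualNorm (dualNorm N) x := by
  rcases eq_or_ne x 0 with rfl | hx
  · rw [hN.map_zero]
    exact hN.isSymmGaugeNorm_dualNorm.dualNorm_nonneg 0
  let _ : SeminormedAddCommGroup (ℕ →₀ ℂ) :=
    hN.toSeminorm.toAddGroupSeminorm.toSeminormedAddCommGroup
  let _ : NormedSpace ℂ (ℕ →₀ ℂ) := ⟨fun c z => (hN.smul_eq c z).le⟩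
  obtain ⟨g, hg, hgx⟩ := exists_dual_vector ℂ x (mt (hN.eq_zero x) hx)
  set y := indicator x.support fun n _ => g (single n 1)
  have hy : dualNorm N y ≤ 1 := hN.dualNorm_le fun z hz => by
    rw [pairing_comm, pairing_indicator_eq_map_filter]
    calc ‖g (z.filter (· ∈ x.support))‖ ≤ ‖g‖ * N (z.filter (· ∈ x.support)) := g.le_opNorm _
      _ ≤ 1 := by rw [hg, one_mul]; exact (hN.filter_le _ z).trans hz
  have hxy : pairing x y = N x := by
    rw [pairing_indicator_eq_map_filter,
      (filter_eq_self_iff _ x).mpr fun n => mem_support_iff.mpr, hgx]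
    rfl
  calc N x = ‖pairing x y‖ := by rw [hxy, Complex.norm_real, Real.norm_of_nonneg (hN.nonneg x)]
    _ ≤ dualNorm (dualNorm N) x * dualNorm N y := hN.isSymmGaugeNorm_dualNorm.norm_pairing_le x y
    _ ≤ dualNorm (dualNorm N) x :=
        mul_le_of_le_one_right (hN.isSymmGaugeNorm_dualNorm.dualNorm_nonneg x) hy

lemma dualNorm_single_zero_one (hN : IsSymmGaugeNorm N) (h : N (single 0 1) = 1) :
    dualNorm N (single 0 1) = 1 := by
  refine le_antisymm (hN.dualNorm_le fun y hy => ?_) ?_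
  · rw [pairing_single_left, one_mul]
    exact (hN.norm_apply_le_div y 0).trans (by rwa [h, div_one])
  · simpa [h] using hN.norm_pairing_le (single 0 1) (single 0 1)

end IsSymmGaugeNorm

/-- If `N` is a symmetric gauge norm on `c₀₀` then its dual norm `N#` is finite on `c₀₀`
and is again a symmetric gauge norm, the second dual satisfies `N## = N`, and if `N` is
normalized then so is `N#`. -/
theorem dualNorm_isSymmGaugeNorm_and_second_dual (N : (ℕ →₀ ℂ) → ℝ)
    (hN : IsSymmGaugeNorm N) :
    (∀ x : ℕ →₀ ℂ, BddAbove {r : ℝ | ∃ y : ℕ →₀ ℂ, N y ≤ 1 ∧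
        r = ‖∑ n ∈ x.support, x n * y n‖}) ∧
    IsSymmGaugeNorm (dualNorm N) ∧
    (∀ x : ℕ →₀ ℂ, dualNorm (dualNorm N) x = N x) ∧
    (N (Finsupp.single 0 1) = 1 → dualNorm N (Finsupp.single 0 1) = 1) :=
  ⟨hN.bddAbove_norm_pairing, hN.isSymmGaugeNorm_dualNorm,
    fun x => le_antisymm (hN.dualNorm_dualNorm_le x) (hN.le_dualNorm_dualNorm x),
    hN.dualNorm_single_zero_one⟩
end

section
/- Let N be a normalized symmetric gauge norm on c₀₀, the space of finitely supported complex sequences. Then there exists a subset 𝓖' of 𝓖 containing the sequence (1,0,0,…) such that for every x ∈ c₀₀, N(x) = sup{ Σ_n a_n x*_n : a ∈ 𝓖' }, where x* is the nonincreasing rearrangement of (|x_n|). -/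
/-- The set `𝓖` of sequences `a : ℕ → ℝ` with `1 ≥ a₀ ≥ a₁ ≥ ⋯ ≥ 0` having only finitely
many nonzero terms. -/
def GSet : Set (ℕ → ℝ) :=
  {a | Antitone a ∧ a 0 ≤ 1 ∧ (∀ n, 0 ≤ a n) ∧ (Function.support a).Finite}

/-!
Let `G'` be the set of `a ∈ 𝓖` with `∑ aₙ y*ₙ ≤ N y` for every `y`. Then the supremum is at most
`N x`, and `(1,0,0,…) ∈ G'` because `N` is monotone in `|y|`, so `max |yₙ| ≤ N y`. For the reverse
inequality, Hahn–Banach gives a real functional `g ≤ N` with `g |x| = N x`; put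
`cₘ = |g eₘ|` on the support of `x`. Testing `g` on sign-adjusted vectors gives
`∑ cₘ |wₘ| ≤ N w` for all `w`, hence, `N` being symmetric, `∑ c*ₙ y*ₙ ≤ N y`: so `c* ∈ G'`.
Finally `N x = g |x| ≤ ∑ cₘ |xₘ| ≤ ∑ c*ₙ x*ₙ` by the Hardy–Littlewood inequality.
-/

open Finset

section Rearrangement

variable {x y : ℕ →₀ ℂ} {M : ℕ}

theorem rearr_eq_of_antitone {π : Equiv.Perm ℕ} (hπ : Antitone fun n => ‖x (π n)‖) (n : ℕ) :
    rearr x n = ‖x (π n)‖ := by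
  refine IsLeast.csInf_eq ⟨⟨(range n).map π.toEmbedding, by simp, fun m hm => ?_⟩, ?_⟩
  · have hmn : n ≤ π.symm m := by
      by_contra! h
      exact hm (mem_map.2 ⟨π.symm m, mem_range.2 h, by simp⟩)
    simpa using hπ hmn
  · rintro c ⟨S, hS, hc⟩
    obtain ⟨k, hk, hkS⟩ : ∃ k ∈ range (n + 1), π k ∉ S := by
      by_contra! h
      have hsub : (range (n + 1)).map π.toEmbedding ⊆ S := by
        intro m hm
        obtain ⟨k, hk, rfl⟩ := mem_map.1 hm
        exact h k hk
      simpa [hS] using card_le_card hsub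
    exact (hπ (Nat.lt_succ_iff.1 (mem_range.1 hk))).trans (hc _ hkS)

theorem exists_perm_antitone_norm (hM : x.support ⊆ range M) :
    ∃ π : Equiv.Perm ℕ, {n | π n ≠ n} ⊆ range M ∧ Antitone fun n => ‖x (π n)‖ := by
  let σ := Tuple.sort fun i : Fin M => -‖x i‖
  let π := σ.extendDomain Fin.equivSubtype
  have hπ_lt {n : ℕ} (hn : n < M) : π n = σ ⟨n, hn⟩ :=
    σ.extendDomain_apply_subtype Fin.equivSubtype hn
  have hπ_ge {n : ℕ} (hn : ¬n < M) : π n = n :=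
    σ.extendDomain_apply_not_subtype Fin.equivSubtype hn
  have hx_ge {n : ℕ} (hn : ¬n < M) : x n = 0 :=
    Finsupp.notMem_support_iff.1 fun h => hn (mem_range.1 (hM h))
  refine ⟨π, fun n hn => mem_range.2 (by_contra fun h => hn (hπ_ge h)), fun i j hij => ?_⟩
  dsimp only
  by_cases hj : j < M
  · rw [hπ_lt hj, hπ_lt (hij.trans_lt hj)]
    simpa using Tuple.monotone_sort (fun i : Fin M => -‖x i‖)
      (show (⟨i, hij.trans_lt hj⟩ : Fin M) ≤ ⟨j, hj⟩ from hij)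
  · simp [hπ_ge hj, hx_ge hj]

theorem exists_perm_rearr_eq (hM : x.support ⊆ range M) :
    ∃ π : Equiv.Perm ℕ, {n | π n ≠ n} ⊆ range M ∧ ∀ n, rearr x n = ‖x (π n)‖ := by
  obtain ⟨π, hπM, hπ⟩ := exists_perm_antitone_norm hM
  exact ⟨π, hπM, rearr_eq_of_antitone hπ⟩

theorem rearr_antitone (x : ℕ →₀ ℂ) : Antitone (rearr x) := by
  obtain ⟨M, hM⟩ := x.support.exists_nat_subset_range
  obtain ⟨π, -, hπ⟩ := exists_perm_antitone_norm hM
  rw [funext (rearr_eq_of_antitone hπ)]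
  exact hπ

theorem rearr_eq_zero_of_le (hM : x.support ⊆ range M) {n : ℕ} (hn : M ≤ n) :
    rearr x n = 0 := by
  obtain ⟨π, hπM, hπ⟩ := exists_perm_rearr_eq hM
  have hπn : π n = n := by_contra fun h => (mem_range.1 (hπM h)).not_ge hn
  have hxn : x n = 0 := Finsupp.notMem_support_iff.1 fun h => (mem_range.1 (hM h)).not_ge hn
  rw [hπ, hπn, hxn, norm_zero]

theorem rearr_mem_GSet (hx : ∀ m, ‖x m‖ ≤ 1) : rearr x ∈ GSet := by
  obtain ⟨M, hM⟩ := x.support.exists_nat_subset_range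
  obtain ⟨π, -, hπ⟩ := exists_perm_rearr_eq hM
  refine ⟨rearr_antitone x, hπ 0 ▸ hx _, fun n => hπ n ▸ norm_nonneg _, ?_⟩
  refine (finite_toSet (range M)).subset fun n hn => mem_range.2 ?_
  by_contra! h
  exact hn (rearr_eq_zero_of_le hM h)

theorem finsum_rearr_mul_eq_sum (hM : x.support ⊆ range M) (f : ℕ → ℝ) :
    ∑ᶠ n, rearr x n * f n = ∑ n ∈ range M, rearr x n * f n := by
  refine finsum_eq_sum_of_support_subset _ fun n hn => mem_range.2 ?_
  by_contra! h
  exact hn (by simp [rearr_eq_zero_of_le hM h])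

/-- The Hardy–Littlewood rearrangement inequality. -/
theorem sum_norm_mul_norm_le_sum_rearr_mul_rearr (hx : x.support ⊆ range M)
    (hy : y.support ⊆ range M) :
    ∑ m ∈ range M, ‖x m‖ * ‖y m‖ ≤ ∑ n ∈ range M, rearr x n * rearr y n := by
  obtain ⟨π, hπM, hπ⟩ := exists_perm_rearr_eq hx
  obtain ⟨ρ, hρM, hρ⟩ := exists_perm_rearr_eq hy
  have hτM : {n | (ρ⁻¹ * π) n ≠ n} ⊆ range M :=
    (Equiv.Perm.set_support_mul_subset _ _).trans
      (Set.union_subset ((Equiv.Perm.set_support_symm_eq ρ).subset.trans hρM) hπM)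
  calc ∑ m ∈ range M, ‖x m‖ * ‖y m‖ = ∑ n ∈ range M, ‖x (π n)‖ * ‖y (π n)‖ :=
        (π.sum_comp _ (fun m => ‖x m‖ * ‖y m‖) hπM).symm
    _ = ∑ n ∈ range M, rearr x n • rearr y ((ρ⁻¹ * π) n) := by simp [hπ, hρ]
    _ ≤ ∑ n ∈ range M, rearr x n • rearr y n :=
        (((rearr_antitone x).monovary (rearr_antitone y)).monovaryOn _)
          |>.sum_smul_comp_perm_le_sum_smul hτM
    _ = _ := rfl

theorem exists_perm_sum_rearr_mul_rearr_eq (hx : x.support ⊆ range M)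
    (hy : y.support ⊆ range M) : ∃ τ : Equiv.Perm ℕ,
      ∑ n ∈ range M, rearr x n * rearr y n = ∑ m ∈ range M, ‖x m‖ * ‖y (τ m)‖ := by
  obtain ⟨π, hπM, hπ⟩ := exists_perm_rearr_eq hx
  obtain ⟨ρ, -, hρ⟩ := exists_perm_rearr_eq hy
  refine ⟨ρ * π⁻¹, ?_⟩
  rw [← π.sum_comp _ (fun m => ‖x m‖ * ‖y ((ρ * π⁻¹) m)‖) hπM]
  simp [hπ, hρ]

end Rearrangement

theorem Seminorm.exists_dual_le_eq {E : Type*} [AddCommGroup E] [Module ℝ E] (p : Seminorm ℝ E)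
    (v : E) : ∃ g : Module.Dual ℝ E, (∀ x, g x ≤ p x) ∧ g v = p v := by
  rcases eq_or_ne v 0 with rfl | hv
  · exact ⟨0, fun x => by simp, by simp⟩
  obtain ⟨g, hgv, hgp⟩ := exists_extension_of_le_sublinear (LinearPMap.mkSpanSingleton v (p v) hv) p
    (fun c hc x => by rw [map_smul_eq_mul, Real.norm_of_nonneg hc.le])
    (map_add_le_add p) (by
      rintro ⟨w, hw⟩
      obtain ⟨d, rfl⟩ := Submodule.mem_span_singleton.1 hw
      rw [LinearPMap.mkSpanSingleton'_apply, map_smul_eq_mul, smul_eq_mul, Real.norm_eq_abs]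
      exact mul_le_mul_of_nonneg_right (le_abs_self d) (apply_nonneg p v))
  refine ⟨g, hgp, ?_⟩
  exact (hgv ⟨v, Submodule.mem_span_singleton_self v⟩).trans
    (LinearPMap.mkSpanSingleton_apply ℝ ℝ hv (p v))

namespace Seminorm

variable (p : Seminorm ℂ (ℕ →₀ ℂ)) {x y : ℕ →₀ ℂ}

theorem map_eq_of_norm_apply_eq (hgauge : ∀ x, p (absF x) = p x) (h : ∀ n, ‖x n‖ = ‖y n‖) :
    p x = p y := by
  rw [← hgauge x, ← hgauge y]
  congr 1
  ext n
  simp [absF, h n]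

theorem map_update_mul_le (hgauge : ∀ x, p (absF x) = p x) (k : ℕ) {t : ℝ} (ht0 : 0 ≤ t)
    (ht1 : t ≤ 1) : p (x.update k (t * x k)) ≤ p x := by
  have hrefl : p (x.update k (-x k)) = p x := p.map_eq_of_norm_apply_eq hgauge fun n => by
    rcases eq_or_ne n k with rfl | hn <;> simp [Finsupp.update_apply, *]
  have hsplit : x.update k (t * x k) =
      (((1 + t) / 2 : ℝ) : ℂ) • x + (((1 - t) / 2 : ℝ) : ℂ) • x.update k (-x k) := by
    ext n
    rcases eq_or_ne n k with rfl | hn <;>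
      simp only [Finsupp.update_apply, Finsupp.add_apply, Finsupp.smul_apply, smul_eq_mul, *,
        if_true, if_false] <;> push_cast <;> ring
  calc p (x.update k (t * x k))
      ≤ p ((((1 + t) / 2 : ℝ) : ℂ) • x) + p ((((1 - t) / 2 : ℝ) : ℂ) • x.update k (-x k)) :=
        hsplit ▸ map_add_le_add p _ _
    _ = (1 + t) / 2 * p x + (1 - t) / 2 * p x := by
        rw [map_smul_eq_mul, map_smul_eq_mul, hrefl, Complex.norm_real, Complex.norm_real,
          Real.norm_of_nonneg (by linarith), Real.norm_of_nonneg (by linarith)]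
    _ = p x := by ring

theorem map_update_le (hgauge : ∀ x, p (absF x) = p x) (k : ℕ) {z : ℂ} (hz : ‖z‖ ≤ ‖x k‖) :
    p (x.update k z) ≤ p x := by
  calc p (x.update k z) = p (x.update k ((‖z‖ / ‖x k‖ : ℝ) * x k)) :=
        p.map_eq_of_norm_apply_eq hgauge fun n => by
          rcases eq_or_ne n k with rfl | hn
          · simp only [Finsupp.update_apply, if_true, norm_mul, Complex.norm_real, Real.norm_eq_abs,
              abs_div, abs_norm]
            refine (div_mul_cancel_of_imp fun h => ?_).symm
            exact norm_eq_zero.2 (norm_le_zero_iff.1 (h ▸ hz))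
          · simp [Finsupp.update_apply, hn]
    _ ≤ p x := p.map_update_mul_le hgauge k (by positivity) (div_le_one_of_le₀ hz (norm_nonneg _))

theorem map_le_of_norm_apply_le (hgauge : ∀ x, p (absF x) = p x) (h : ∀ n, ‖y n‖ ≤ ‖x n‖) :
    p y ≤ p x := by
  classical
  suffices ∀ (S : Finset ℕ) (y : ℕ →₀ ℂ), (∀ n, ‖y n‖ ≤ ‖x n‖) → (∀ n ∉ S, y n = x n) →
      p y ≤ p x from
    this (x.support ∪ y.support) y h fun n hn => by simp_all
  intro S
  induction S using Finset.induction_on with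
  | empty =>
    intro y _ hy
    rw [Finsupp.ext fun n => hy n (notMem_empty n)]
  | insert k S _ ih =>
    intro y hle hy
    calc p y = p ((y.update k (x k)).update k (y k)) := by simp
      _ ≤ p (y.update k (x k)) := p.map_update_le hgauge k (by simpa using hle k)
      _ ≤ p x := ih _ (fun n => by rcases eq_or_ne n k with rfl | hn <;> simp [*])
          fun n hn => by rcases eq_or_ne n k with rfl | hn' <;> simp_all

theorem map_single (hsymm : ∀ (σ : Equiv.Perm ℕ) x, p (Finsupp.equivMapDomain σ x) = p x)
    (hnorm : p (Finsupp.single 0 1) = 1) (n : ℕ) (z : ℂ) : p (Finsupp.single n z) = ‖z‖ := by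
  have hone : p (Finsupp.single n 1) = 1 := by
    simpa [hnorm] using hsymm (Equiv.swap 0 n) (Finsupp.single 0 1)
  rw [← Finsupp.smul_single_one, map_smul_eq_mul, hone, mul_one]

theorem norm_apply_le (hgauge : ∀ x, p (absF x) = p x)
    (hsymm : ∀ (σ : Equiv.Perm ℕ) x, p (Finsupp.equivMapDomain σ x) = p x)
    (hnorm : p (Finsupp.single 0 1) = 1) (x : ℕ →₀ ℂ) (m : ℕ) : ‖x m‖ ≤ p x := by
  rw [← p.map_single hsymm hnorm m]
  refine p.map_le_of_norm_apply_le hgauge fun n => ?_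
  rcases eq_or_ne m n with rfl | hn <;> simp [*]

theorem sum_abs_apply_single_mul_norm_le (hgauge : ∀ x, p (absF x) = p x)
    {g : Module.Dual ℝ (ℕ →₀ ℂ)} (hg : ∀ w, g w ≤ p w) (S : Finset ℕ) (w : ℕ →₀ ℂ) :
    ∑ m ∈ S, |g (Finsupp.single m 1)| * ‖w m‖ ≤ p w := by
  classical
  -- Test `g` on the vector with entries `± ‖w m‖`, the signs matching those of `g` on the basis.
  let w' : ℕ →₀ ℂ :=
    ∑ m ∈ S, (SignType.sign (g (Finsupp.single m 1)) * ‖w m‖ : ℝ) • Finsupp.single m 1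
  have hgw' : g w' = ∑ m ∈ S, |g (Finsupp.single m 1)| * ‖w m‖ := by
    simp only [w', map_sum, map_smul, smul_eq_mul]
    refine sum_congr rfl fun m _ => ?_
    rw [mul_right_comm, sign_mul_self]
  have hw' : ∀ n, ‖w' n‖ ≤ ‖w n‖ := fun n => by
    simp only [w', Finsupp.finsetSum_apply, Finsupp.smul_apply, Finsupp.single_apply,
      smul_ite, smul_zero]
    rw [sum_ite_eq']
    split_ifs
    · rw [norm_smul, norm_one, mul_one, norm_mul, norm_norm]
      generalize SignType.sign (g (Finsupp.single n 1)) = s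
      cases s <;> simp
    · simp
  calc _ = g w' := hgw'.symm
    _ ≤ p w' := hg w'
    _ ≤ p w := p.map_le_of_norm_apply_le hgauge hw'

theorem exists_norming_weight (hgauge : ∀ x, p (absF x) = p x) (x : ℕ →₀ ℂ) :
    ∃ c : ℕ →₀ ℂ, c.support ⊆ x.support ∧
      (∀ (s : Finset ℕ) (w : ℕ →₀ ℂ), ∑ m ∈ s, ‖c m‖ * ‖w m‖ ≤ p w) ∧
      p x ≤ ∑ m ∈ x.support, ‖c m‖ * ‖x m‖ := by
  classical
  obtain ⟨g, hgp, hgx⟩ := (p.restrictScalars ℝ).exists_dual_le_eq (absF x)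
  let c := Finsupp.indicator x.support fun m _ => ((|g (Finsupp.single m 1)| : ℝ) : ℂ)
  have hc : ∀ m ∈ x.support, ‖c m‖ = |g (Finsupp.single m 1)| := fun m hm => by
    simp [c, Finsupp.indicator_apply, hm]
  have hc_le : ∀ m, ‖c m‖ ≤ |g (Finsupp.single m 1)| := fun m => by
    by_cases hm : m ∈ x.support
    · exact (hc m hm).le
    · simp [c, Finsupp.indicator_apply, hm]
  have habs : absF x = ∑ m ∈ x.support, ‖x m‖ • Finsupp.single m (1 : ℂ) := by
    ext n
    by_cases hn : n ∈ x.support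
    · simp [absF, Finsupp.finsetSum_apply, Finsupp.single_apply, hn]
    · simp_all [absF, Finsupp.finsetSum_apply, Finsupp.single_apply]
  refine ⟨c, Finsupp.support_indicator_subset _ _, fun s w => ?_, ?_⟩
  · calc ∑ m ∈ s, ‖c m‖ * ‖w m‖ ≤ ∑ m ∈ s, |g (Finsupp.single m 1)| * ‖w m‖ :=
          sum_le_sum fun m _ => mul_le_mul_of_nonneg_right (hc_le m) (norm_nonneg _)
      _ ≤ p w := p.sum_abs_apply_single_mul_norm_le hgauge hgp s w
  · calc p x = g (absF x) := (hgx.trans (hgauge x)).symm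
      _ = ∑ m ∈ x.support, ‖x m‖ * g (Finsupp.single m 1) := by
          simp only [habs, map_sum, map_smul, smul_eq_mul]
      _ ≤ ∑ m ∈ x.support, ‖c m‖ * ‖x m‖ := sum_le_sum fun m hm => by
          rw [hc m hm, mul_comm]
          exact mul_le_mul_of_nonneg_right (le_abs_self _) (norm_nonneg _)

theorem rearr_le (hgauge : ∀ x, p (absF x) = p x)
    (hsymm : ∀ (σ : Equiv.Perm ℕ) x, p (Finsupp.equivMapDomain σ x) = p x)
    (hnorm : p (Finsupp.single 0 1) = 1) (x : ℕ →₀ ℂ) (n : ℕ) : rearr x n ≤ p x := by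
  obtain ⟨M, hM⟩ := x.support.exists_nat_subset_range
  obtain ⟨π, -, hπ⟩ := exists_perm_rearr_eq hM
  exact hπ n ▸ p.norm_apply_le hgauge hsymm hnorm x (π n)

theorem sum_rearr_mul_rearr_le
    (hsymm : ∀ (σ : Equiv.Perm ℕ) x, p (Finsupp.equivMapDomain σ x) = p x) {c : ℕ →₀ ℂ}
    (hc : ∀ (s : Finset ℕ) (w : ℕ →₀ ℂ), ∑ m ∈ s, ‖c m‖ * ‖w m‖ ≤ p w) {M : ℕ}
    (hcM : c.support ⊆ range M) (hyM : y.support ⊆ range M) :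
    ∑ n ∈ range M, rearr c n * rearr y n ≤ p y := by
  obtain ⟨τ, hτ⟩ := exists_perm_sum_rearr_mul_rearr_eq hcM hyM
  rw [hτ, ← hsymm τ.symm y]
  simpa using hc (range M) (Finsupp.equivMapDomain τ.symm y)

theorem exists_mem_GSet_norming (hgauge : ∀ x, p (absF x) = p x)
    (hsymm : ∀ (σ : Equiv.Perm ℕ) x, p (Finsupp.equivMapDomain σ x) = p x)
    (hnorm : p (Finsupp.single 0 1) = 1) (x : ℕ →₀ ℂ) :
    ∃ a ∈ GSet, (∀ y, ∑ᶠ n, a n * rearr y n ≤ p y) ∧ p x ≤ ∑ᶠ n, a n * rearr x n := by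
  obtain ⟨c, hcx, hc, hpx⟩ := p.exists_norming_weight hgauge x
  have hc_le_one : ∀ m, ‖c m‖ ≤ 1 := fun m => by
    simpa [p.map_single hsymm hnorm] using hc {m} (Finsupp.single m 1)
  refine ⟨rearr c, rearr_mem_GSet hc_le_one, fun y => ?_, ?_⟩
  · obtain ⟨M, hM⟩ := (c.support ∪ y.support).exists_nat_subset_range
    rw [finsum_rearr_mul_eq_sum (subset_union_left.trans hM)]
    exact p.sum_rearr_mul_rearr_le hsymm hc (subset_union_left.trans hM)
      (subset_union_right.trans hM)
  · obtain ⟨M, hM⟩ := x.support.exists_nat_subset_range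
    rw [finsum_rearr_mul_eq_sum (hcx.trans hM)]
    calc p x ≤ ∑ m ∈ x.support, ‖c m‖ * ‖x m‖ := hpx
      _ = ∑ m ∈ range M, ‖c m‖ * ‖x m‖ :=
          sum_subset hM fun m _ hm => by simp [Finsupp.notMem_support_iff.1 hm]
      _ ≤ ∑ n ∈ range M, rearr c n * rearr x n :=
          sum_norm_mul_norm_le_sum_rearr_mul_rearr (hcx.trans hM) hM

end Seminorm

theorem ite_zero_mem_GSet : (fun n => if n = 0 then (1 : ℝ) else 0) ∈ GSet := by
  refine ⟨fun i j hij => ?_, by simp, fun n => by positivity, ?_⟩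
  · by_cases hj : j = 0
    · simp [hj, Nat.le_zero.1 (hj ▸ hij)]
    · simp only [hj, if_false]
      positivity
  · exact (Set.finite_singleton 0).subset fun n hn => by simpa using hn

theorem symmetric_gauge_norm_representation_general (N : (ℕ →₀ ℂ) → ℝ)
    (hadd : ∀ x y : ℕ →₀ ℂ, N (x + y) ≤ N x + N y)
    (hsmul : ∀ (c : ℂ) (x : ℕ →₀ ℂ), N (c • x) = ‖c‖ * N x)
    (hgauge : ∀ x : ℕ →₀ ℂ, N (absF x) = N x)
    (hsymm : ∀ (σ : Equiv.Perm ℕ) (x : ℕ →₀ ℂ), N (Finsupp.equivMapDomain σ x) = N x)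
    (hnormalized : N (Finsupp.single 0 1) = 1) :
    ∃ G' ⊆ GSet, (fun n => if n = 0 then (1:ℝ) else 0) ∈ G' ∧
      ∀ x : ℕ →₀ ℂ, N x = sSup ((fun a : ℕ → ℝ => ∑ᶠ n, a n * rearr x n) '' G') := by
  let p : Seminorm ℂ (ℕ →₀ ℂ) := Seminorm.of N hadd hsmul
  refine ⟨{a | a ∈ GSet ∧ ∀ y, ∑ᶠ n, a n * rearr y n ≤ N y}, fun a ha => ha.1,
    ⟨ite_zero_mem_GSet, fun y => ?_⟩, fun x => ?_⟩
  · rw [finsum_eq_single _ 0 fun n hn => by simp [hn]]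
    simp only [if_true, one_mul]
    exact p.rearr_le hgauge hsymm hnormalized y 0
  · obtain ⟨a, ha, hle, hge⟩ := p.exists_mem_GSet_norming hgauge hsymm hnormalized x
    rw [eq_comm]
    refine IsGreatest.csSup_eq ⟨⟨a, ⟨ha, hle⟩, (hle x).antisymm hge⟩, ?_⟩
    rintro _ ⟨b, ⟨-, hb⟩, rfl⟩
    exact hb x

/-- Representation theorem for normalized symmetric gauge norms on `c₀₀`: there is a subset
`𝓖'` of `𝓖` containing `(1,0,0,…)` with `N(x) = sup{ Σ_n a_n x*_n : a ∈ 𝓖' }` for all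
`x ∈ c₀₀`. -/
theorem symmetric_gauge_norm_representation (N : (ℕ →₀ ℂ) → ℝ)
    (hadd : ∀ x y : ℕ →₀ ℂ, N (x + y) ≤ N x + N y)
    (hsmul : ∀ (c : ℂ) (x : ℕ →₀ ℂ), N (c • x) = ‖c‖ * N x)
    (hdef : ∀ x : ℕ →₀ ℂ, N x = 0 → x = 0)
    (hgauge : ∀ x : ℕ →₀ ℂ, N (absF x) = N x)
    (hsymm : ∀ (σ : Equiv.Perm ℕ) (x : ℕ →₀ ℂ), N (Finsupp.equivMapDomain σ x) = N x)
    (hnormalized : N (Finsupp.single 0 1) = 1) :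
    ∃ G' ⊆ GSet, (fun n => if n = 0 then (1:ℝ) else 0) ∈ G' ∧
      ∀ x : ℕ →₀ ℂ, N x = sSup ((fun a : ℕ → ℝ => ∑ᶠ n, a n * rearr x n) '' G') :=
  symmetric_gauge_norm_representation_general N hadd hsmul hgauge hsymm hnormalized
end
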